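/- arXiv:math/0308233 — 8 statements merged into one kernel-verified Lean document; each statement's English description precedes it below -/
import Mathlib

section
/- For all real numbers a > 0 and b > 0, the complete elliptic integral G(a,b) = ∫₀^{π/2} dθ/√(a²cos²θ + b²sin²θ) is invariant under the Landen transformation, i.e. G(a,b) = G((a+b)/2, √(ab)). -/
/-!
The substitution `t = b tan θ` turns `G(a, b)` into `∫₀^∞ dt / √((t² + a²)(t² + b²))`.
Gauss's substitution `u = (t - ab/t)/2` maps `(0, ∞)` increasingly onto `ℝ`, and
`u² + ab = ((t² + ab)/(2t))²`, `u² + ((a + b)/2)² = (t² + a²)(t² + b²)/(2t)²`, with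
`du = (t² + ab)/(2t²) dt`. So the integral over `ℝ` of the integrand for the means
`((a + b)/2, √(ab))` is twice the integral over `(0, ∞)` of the one for `(a, b)`; by evenness
it is also twice the integral of the former over `(0, ∞)`.
-/

open MeasureTheory Set Real

lemma mul_one_div_sqrt_mul_sq {k : ℝ} (hk : 0 < k) (x : ℝ) :
    k * (1 / √(x * k ^ 2)) = 1 / √x := by
  rw [sqrt_mul' x (sq_nonneg k), sqrt_sq hk.le]
  rcases eq_or_ne (√x) 0 with hx | hx
  · simp [hx]
  · field_simp

lemma image_const_mul_tan_Ioo {b : ℝ} (hb : 0 < b) :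
    (fun θ => b * tan θ) '' Ioo 0 (π / 2) = Ioi 0 := by
  ext y
  constructor
  · rintro ⟨θ, ⟨h0, hπ⟩, rfl⟩
    exact mul_pos hb (tan_pos_of_pos_of_lt_pi_div_two h0 hπ)
  · intro hy
    refine ⟨arctan (y / b), ⟨?_, arctan_lt_pi_div_two _⟩, ?_⟩
    · simpa using arctan_strictMono (div_pos hy hb)
    · simp only [tan_arctan]
      field_simp

lemma quartic_const_mul_tan (a b : ℝ) {θ : ℝ} (hθ : cos θ ≠ 0) :
    ((b * tan θ) ^ 2 + a ^ 2) * ((b * tan θ) ^ 2 + b ^ 2)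
      = (a ^ 2 * cos θ ^ 2 + b ^ 2 * sin θ ^ 2) * (b / cos θ ^ 2) ^ 2 := by
  rw [tan_eq_sin_div_cos]
  field_simp
  rw [sin_sq]
  ring

theorem integral_one_div_sqrt_cos_sin_eq_integral_Ioi (a : ℝ) {b : ℝ} (hb : 0 < b) :
    ∫ θ in (0:ℝ)..π / 2, 1 / √(a ^ 2 * cos θ ^ 2 + b ^ 2 * sin θ ^ 2)
      = ∫ t in Ioi 0, 1 / √((t ^ 2 + a ^ 2) * (t ^ 2 + b ^ 2)) := by
  have hsub : Ioo 0 (π / 2) ⊆ Ioo (-(π / 2)) (π / 2) :=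
    Ioo_subset_Ioo (by linarith [pi_pos]) le_rfl
  have hcos : ∀ θ ∈ Ioo 0 (π / 2), 0 < cos θ := fun θ hθ => cos_pos_of_mem_Ioo (hsub hθ)
  have hderiv : ∀ θ ∈ Ioo 0 (π / 2),
      HasDerivWithinAt (fun θ => b * tan θ) (b / cos θ ^ 2) (Ioo 0 (π / 2)) θ := by
    intro θ hθ
    simpa [div_eq_mul_inv] using
      ((hasDerivAt_tan (hcos θ hθ).ne').const_mul b).hasDerivWithinAt
  have hinj : InjOn (fun θ => b * tan θ) (Ioo 0 (π / 2)) :=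
    fun x hx y hy hxy => injOn_tan (hsub hx) (hsub hy) (mul_left_cancel₀ hb.ne' hxy)
  rw [← image_const_mul_tan_Ioo hb, integral_image_eq_integral_abs_deriv_smul measurableSet_Ioo
    hderiv hinj, intervalIntegral.integral_of_le (by positivity), integral_Ioc_eq_integral_Ioo]
  refine setIntegral_congr_fun measurableSet_Ioo fun θ hθ => ?_
  have hk : 0 < b / cos θ ^ 2 := div_pos hb (pow_pos (hcos θ hθ) 2)
  rw [smul_eq_mul, abs_of_pos hk, quartic_const_mul_tan a b (hcos θ hθ).ne',
    mul_one_div_sqrt_mul_sq hk]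

lemma image_half_sub_div_Ioi {c : ℝ} (hc : 0 < c) :
    (fun t => (t - c / t) / 2) '' Ioi 0 = univ := by
  refine eq_univ_of_forall fun u => ?_
  have habs : |u| < √(u ^ 2 + c) := by
    rw [← sqrt_sq_eq_abs]
    exact sqrt_lt_sqrt (sq_nonneg u) (by linarith)
  have hpos : 0 < u + √(u ^ 2 + c) := by linarith [neg_abs_le u]
  have hsq : √(u ^ 2 + c) ^ 2 = u ^ 2 + c := sq_sqrt (by positivity)
  refine ⟨u + √(u ^ 2 + c), hpos, ?_⟩
  field_simp
  linear_combination hsq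

lemma strictMonoOn_half_sub_div_Ioi {c : ℝ} (hc : 0 ≤ c) :
    StrictMonoOn (fun t => (t - c / t) / 2) (Ioi 0) := by
  intro x hx y hy hxy
  have hdiv : c / y ≤ c / x := div_le_div_of_nonneg_left hc hx hxy.le
  dsimp only
  linarith

theorem integral_Ioi_comp_half_sub_div {E : Type*} [NormedAddCommGroup E] [NormedSpace ℝ E]
    {c : ℝ} (hc : 0 < c) (f : ℝ → E) :
    ∫ t in Ioi 0, ((1 + c / t ^ 2) / 2) • f ((t - c / t) / 2) = ∫ u, f u := by
  have hderiv : ∀ t ∈ Ioi (0:ℝ),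
      HasDerivWithinAt (fun t => (t - c / t) / 2) ((1 + c / t ^ 2) / 2) (Ioi 0) t := by
    intro t ht
    have := ((hasDerivAt_id' t).sub ((hasDerivAt_const t c).div (hasDerivAt_id' t)
      (ne_of_gt ht))).div_const 2
    refine (this.congr_deriv ?_).hasDerivWithinAt
    field_simp
    ring
  rw [← setIntegral_univ (f := f), ← image_half_sub_div_Ioi hc,
    integral_image_eq_integral_abs_deriv_smul measurableSet_Ioi hderiv
      (strictMonoOn_half_sub_div_Ioi hc.le).injOn]
  refine setIntegral_congr_fun measurableSet_Ioi fun t _ => ?_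
  rw [abs_of_pos (by positivity)]

lemma quartic_half_sub_div (a b : ℝ) {t : ℝ} (ht : t ≠ 0) :
    (((t - a * b / t) / 2) ^ 2 + ((a + b) / 2) ^ 2) * (((t - a * b / t) / 2) ^ 2 + a * b)
      = (t ^ 2 + a ^ 2) * (t ^ 2 + b ^ 2) * ((t ^ 2 + a * b) / (4 * t ^ 2)) ^ 2 := by
  field_simp
  ring

theorem integral_Ioi_landen {a b : ℝ} (hab : 0 < a * b) :
    ∫ t in Ioi 0, 1 / √((t ^ 2 + ((a + b) / 2) ^ 2) * (t ^ 2 + √(a * b) ^ 2))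
      = ∫ t in Ioi 0, 1 / √((t ^ 2 + a ^ 2) * (t ^ 2 + b ^ 2)) := by
  set g : ℝ → ℝ := fun u => 1 / √((u ^ 2 + ((a + b) / 2) ^ 2) * (u ^ 2 + a * b))
  have heven : ∫ u, g u = 2 * ∫ u in Ioi 0, g u := by
    rw [← integral_comp_abs]
    simp only [g, sq_abs]
  have hsubst : ∫ u, g u = 2 * ∫ t in Ioi 0, 1 / √((t ^ 2 + a ^ 2) * (t ^ 2 + b ^ 2)) := by
    rw [← integral_Ioi_comp_half_sub_div hab, ← integral_const_mul]
    refine setIntegral_congr_fun measurableSet_Ioi fun t (ht : 0 < t) => ?_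
    have hk : 0 < (t ^ 2 + a * b) / (4 * t ^ 2) := by positivity
    have hjac : (1 + a * b / t ^ 2) / 2 = 2 * ((t ^ 2 + a * b) / (4 * t ^ 2)) := by
      field_simp
      ring
    simp only [g, smul_eq_mul]
    rw [quartic_half_sub_div a b ht.ne', hjac, mul_assoc 2, mul_one_div_sqrt_mul_sq hk]
  rw [sq_sqrt hab.le]
  linarith

/-- The complete elliptic integral `G(a,b) = ∫₀^{π/2} dθ/√(a²cos²θ + b²sin²θ)` is invariant
under the Landen transformation `(a,b) ↦ ((a+b)/2, √(ab))`. -/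
theorem landen_elliptic_invariance (a b : ℝ) (ha : 0 < a) (hb : 0 < b) :
    ∫ θ in (0:ℝ)..(Real.pi / 2),
        1 / Real.sqrt (a ^ 2 * Real.cos θ ^ 2 + b ^ 2 * Real.sin θ ^ 2)
      = ∫ θ in (0:ℝ)..(Real.pi / 2),
        1 / Real.sqrt (((a + b) / 2) ^ 2 * Real.cos θ ^ 2
            + Real.sqrt (a * b) ^ 2 * Real.sin θ ^ 2) := by
  have hab : 0 < a * b := mul_pos ha hb
  rw [integral_one_div_sqrt_cos_sin_eq_integral_Ioi a hb,
    integral_one_div_sqrt_cos_sin_eq_integral_Ioi _ (sqrt_pos.2 hab), integral_Ioi_landen hab]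
end

section
/- Let R = P/Q be a real rational function whose denominator Q has no real zeros and with deg P ≤ deg Q - 2. Then ∫_{-∞}^{∞} R(z) dz = ∫_{-∞}^{∞} [R(σ₊(w))σ₊'(w) + R(σ₋(w))σ₋'(w)] dw, where σ₊(w) = w + √(w²+1) and σ₋(w) = w - √(w²+1). -/
open MeasureTheory

/-- The direct image of the 1-form `S(z)dz` under `π(z) = (z²-1)/(2z)`, computed with the
two sections `σ±(w) = w ± √(w²+1)`, whose derivatives are `1 ± w/√(w²+1)`. -/
noncomputable def pushforward (S : ℝ → ℝ) (w : ℝ) : ℝ :=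
  S (w + Real.sqrt (w ^ 2 + 1)) * (1 + w / Real.sqrt (w ^ 2 + 1)) +
  S (w - Real.sqrt (w ^ 2 + 1)) * (1 - w / Real.sqrt (w ^ 2 + 1))

/-!
`σ₊` is a monotone diffeomorphism of `ℝ` onto `(0, ∞)`, so `∫ R(σ₊ w) σ₊'(w) dw = ∫₀^∞ R`.
Since `σ₋(w) = -σ₊(-w)`, the `σ₋`-term is the same substitution applied to `z ↦ R(-z)` followed
by the reflection `w ↦ -w`, and it gives `∫_{-∞}^0 R`. The degree condition makes
`R = O((1 + x²)⁻¹)` at infinity, so `R` is integrable and the two halves add up.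
-/

open Set Filter Asymptotics Polynomial

lemma abs_lt_sqrt_sq_add_one (w : ℝ) : |w| < √(w ^ 2 + 1) := by
  rw [← Real.sqrt_sq_eq_abs]
  exact Real.sqrt_lt_sqrt (sq_nonneg w) (lt_add_one _)

lemma hasDerivAt_add_sqrt_sq_add_one (w : ℝ) :
    HasDerivAt (fun w ↦ w + √(w ^ 2 + 1)) (1 + w / √(w ^ 2 + 1)) w := by
  have hsq : HasDerivAt (fun w : ℝ ↦ w ^ 2 + 1) (2 * w) w := by
    simpa using (hasDerivAt_pow 2 w).add_const 1
  have hpos : 0 < √(w ^ 2 + 1) := (abs_nonneg w).trans_lt (abs_lt_sqrt_sq_add_one w)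
  refine (hasDerivAt_id w).add ((hsq.sqrt (by positivity)).congr_deriv ?_)
  field_simp

lemma one_add_div_sqrt_sq_add_one_pos (w : ℝ) : 0 < 1 + w / √(w ^ 2 + 1) := by
  have h := abs_lt_sqrt_sq_add_one w
  have hpos : 0 < √(w ^ 2 + 1) := (abs_nonneg w).trans_lt h
  rw [← neg_lt_iff_pos_add, ← neg_div, div_lt_one hpos]
  exact (neg_le_abs w).trans_lt h

lemma monotone_add_sqrt_sq_add_one : Monotone fun w : ℝ ↦ w + √(w ^ 2 + 1) :=
  (strictMono_of_deriv_pos fun w ↦ by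
    rw [(hasDerivAt_add_sqrt_sq_add_one w).deriv]
    exact one_add_div_sqrt_sq_add_one_pos w).monotone

/-- `π(z) = (z² - 1)/(2z)` is a right inverse of `σ₊` on `(0, ∞)`. -/
lemma range_add_sqrt_sq_add_one : range (fun w : ℝ ↦ w + √(w ^ 2 + 1)) = Ioi 0 := by
  ext z
  refine ⟨?_, fun hz ↦ ⟨(z ^ 2 - 1) / (2 * z), ?_⟩⟩
  · rintro ⟨w, rfl⟩
    show 0 < w + √(w ^ 2 + 1)
    linarith [neg_le_abs w, abs_lt_sqrt_sq_add_one w]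
  · have hz : (0 : ℝ) < z := hz
    dsimp only
    have hsq : ((z ^ 2 - 1) / (2 * z)) ^ 2 + 1 = ((z ^ 2 + 1) / (2 * z)) ^ 2 := by
      field_simp
      ring
    rw [hsq, Real.sqrt_sq (by positivity)]
    field_simp
    ring

lemma integral_comp_add_sqrt_sq_add_one_mul (g : ℝ → ℝ) :
    ∫ w, g (w + √(w ^ 2 + 1)) * (1 + w / √(w ^ 2 + 1)) = ∫ z in Ioi 0, g z := by
  have h := integral_image_eq_integral_deriv_smul_of_monotoneOn MeasurableSet.univ
    (fun w _ ↦ (hasDerivAt_add_sqrt_sq_add_one w).hasDerivWithinAt)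
    (monotone_add_sqrt_sq_add_one.monotoneOn _) g
  rw [image_univ, range_add_sqrt_sq_add_one, Measure.restrict_univ] at h
  simp only [h, smul_eq_mul, mul_comm]

lemma integrable_comp_add_sqrt_sq_add_one_mul {g : ℝ → ℝ} (hg : IntegrableOn g (Ioi 0)) :
    Integrable fun w ↦ g (w + √(w ^ 2 + 1)) * (1 + w / √(w ^ 2 + 1)) := by
  have h := integrableOn_image_iff_integrableOn_deriv_smul_of_monotoneOn MeasurableSet.univ
    (fun w _ ↦ (hasDerivAt_add_sqrt_sq_add_one w).hasDerivWithinAt)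
    (monotone_add_sqrt_sq_add_one.monotoneOn _) g
  rw [image_univ, range_add_sqrt_sq_add_one, integrableOn_univ] at h
  simpa only [smul_eq_mul, mul_comm] using h.mp hg

lemma pushforward_eq (g : ℝ → ℝ) (w : ℝ) :
    pushforward g w = g (w + √(w ^ 2 + 1)) * (1 + w / √(w ^ 2 + 1)) +
      g (-(-w + √((-w) ^ 2 + 1))) * (1 + -w / √((-w) ^ 2 + 1)) := by
  rw [pushforward, neg_sq, neg_add', neg_neg, neg_div, ← sub_eq_add_neg]

theorem integral_pushforward {g : ℝ → ℝ} (hg : Integrable g) :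
    ∫ w, pushforward g w = ∫ z, g z := by
  have hpos := integrable_comp_add_sqrt_sq_add_one_mul hg.integrableOn
  have hneg := (integrable_comp_add_sqrt_sq_add_one_mul (g := fun z ↦ g (-z))
    hg.comp_neg.integrableOn).comp_neg
  calc ∫ w, pushforward g w
      = (∫ w, g (w + √(w ^ 2 + 1)) * (1 + w / √(w ^ 2 + 1))) +
          ∫ w, g (-(-w + √((-w) ^ 2 + 1))) * (1 + -w / √((-w) ^ 2 + 1)) := by
        simp only [pushforward_eq]
        exact integral_add hpos hneg
    _ = (∫ z in Ioi 0, g z) + ∫ z in Ioi 0, g (-z) := by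
        rw [integral_neg_eq_self (fun w ↦ g (-(w + √(w ^ 2 + 1))) * (1 + w / √(w ^ 2 + 1)))]
        exact congrArg₂ (· + ·) (integral_comp_add_sqrt_sq_add_one_mul g)
          (integral_comp_add_sqrt_sq_add_one_mul fun z ↦ g (-z))
    _ = ∫ z, g z := by
        rw [integral_comp_neg_Ioi, neg_zero, add_comm,
          intervalIntegral.integral_Iic_add_Ioi hg.integrableOn hg.integrableOn]

lemma Polynomial.eval_div_eval_isBigO_inv_one_add_sq {P Q : ℝ[X]} (hQ : ∀ x : ℝ, Q.eval x ≠ 0)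
    (hdeg : P.degree + 2 ≤ Q.degree) :
    (fun x ↦ P.eval x / Q.eval x) =O[cocompact ℝ] fun x ↦ (1 + x ^ 2)⁻¹ := by
  have hdeg' : (P * (X ^ 2 + C 1)).degree ≤ Q.degree := by
    rwa [degree_mul, degree_X_pow_add_C two_pos]
  have h := (isBigO_cobounded_of_degree_le hdeg').mul
    (isBigO_refl (fun x ↦ (Q.eval x * (1 + x ^ 2))⁻¹) (Bornology.cobounded ℝ))
  rw [Metric.cobounded_eq_cocompact] at h
  refine h.congr (fun x ↦ ?_) (fun x ↦ ?_)
  · have := hQ x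
    simp only [eval_mul, eval_add, eval_pow, eval_X, eval_C]
    field_simp
    ring
  · have := hQ x
    field_simp

lemma Polynomial.integrable_eval_div_eval {P Q : ℝ[X]} (hQ : ∀ x : ℝ, Q.eval x ≠ 0)
    (hdeg : P.degree + 2 ≤ Q.degree) : Integrable fun x ↦ P.eval x / Q.eval x :=
  (P.continuous.div Q.continuous hQ).locallyIntegrable.integrable_of_isBigO_cocompact
    (eval_div_eval_isBigO_inv_one_add_sq hQ hdeg) (integrable_inv_one_add_sq.integrableAtFilter _)

/-- For a real rational function `R = P/Q` with no real poles and `deg P ≤ deg Q - 2`,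
the integral over `ℝ` of `R` equals the integral over `ℝ` of its direct image under
`π(z) = (z²-1)/(2z)`. -/
theorem integral_eq_integral_pushforward (P Q : Polynomial ℝ)
    (hQ : ∀ x : ℝ, Q.eval x ≠ 0) (hdeg : P.degree + 2 ≤ Q.degree) :
    ∫ z : ℝ, P.eval z / Q.eval z
      = ∫ w : ℝ, pushforward (fun z => P.eval z / Q.eval z) w :=
  (integral_pushforward (integrable_eval_div_eval hQ hdeg)).symm
end

section
/- Let R > 1 and let (a_k)_{k∈ℤ} be complex numbers with ‖φ‖ := |a₀| + Σ_{k=1}^∞ (|a_k| + |a_{-k}|) R^k < ∞. For n ≥ 1, the n-th iterated direct image under F(z) = z² has coefficient sequence k ↦ a_{2ⁿk}, and satisfies the superconvergence estimate |a₀ - a₀| + Σ_{k=1}^∞ (|a_{2ⁿk}| + |a_{-2ⁿk}|) R^k ≤ (R/R^{2ⁿ}) ‖φ‖; in particular ‖(F_*)ⁿφ - a₀ dz/z‖ → 0 as n → ∞. -/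
open Filter

/-! Taking every `N`-th coefficient moves the coefficient of index `N (k + 1)`, which `‖φ‖` weights
by `R ^ (N (k + 1))`, to index `k + 1`, where it is weighted by `R ^ (k + 1)`. Since
`R ^ (k + 1) ≤ (R / R ^ N) R ^ (N (k + 1))`, the dilated tail is at most `R / R ^ N` times the
original one, and with `N = 2 ^ n` this factor tends to `0` doubly exponentially. -/

theorem pow_succ_le_div_pow_mul_pow_mul_succ {R : ℝ} (hR : 1 ≤ R) {N : ℕ} (hN : 0 < N) (k : ℕ) :
    R ^ (k + 1) ≤ R / R ^ N * R ^ (N * (k + 1)) := by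
  have hR0 : 0 < R := zero_lt_one.trans_le hR
  have hexp : k + 1 ≤ N * k + 1 := by nlinarith
  calc R ^ (k + 1) ≤ R ^ (N * k + 1) := pow_le_pow_right₀ hR hexp
    _ = R / R ^ N * R ^ (N * (k + 1)) := by
      rw [div_mul_eq_mul_div, eq_div_iff (by positivity)]
      ring

theorem tsum_dilate_le {R : ℝ} (hR : 1 ≤ R) {N : ℕ} (hN : 0 < N) {w : ℕ → ℝ}
    (hw : ∀ m, 0 ≤ w m) (hsum : Summable fun k : ℕ => w (k + 1) * R ^ (k + 1)) :
    ∑' k : ℕ, w (N * (k + 1)) * R ^ (k + 1) ≤ R / R ^ N * ∑' k : ℕ, w (k + 1) * R ^ (k + 1) := by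
  have hR0 : 0 < R := zero_lt_one.trans_le hR
  obtain ⟨idx, hidx⟩ : ∃ idx : ℕ → ℕ, ∀ k, idx k + 1 = N * (k + 1) :=
    ⟨fun k => N * k + (N - 1), fun k => by simp only [mul_add, mul_one]; omega⟩
  have hidx_inj : Function.Injective idx := fun k l h => by
    have : N * (k + 1) = N * (l + 1) := by rw [← hidx k, ← hidx l, h]
    have := Nat.eq_of_mul_eq_mul_left hN this
    omega
  have hterm : ∀ k, w (N * (k + 1)) * R ^ (k + 1)
      ≤ R / R ^ N * (w (idx k + 1) * R ^ (idx k + 1)) := fun k => by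
    rw [hidx, mul_left_comm]
    exact mul_le_mul_of_nonneg_left (pow_succ_le_div_pow_mul_pow_mul_succ hR hN k) (hw _)
  have hnonneg : ∀ k, 0 ≤ w (N * (k + 1)) * R ^ (k + 1) := fun k => by
    have := hw (N * (k + 1)); positivity
  have hdilated : Summable fun k : ℕ => w (N * (k + 1)) * R ^ (k + 1) :=
    .of_nonneg_of_le hnonneg hterm ((hsum.comp_injective hidx_inj).mul_left _)
  calc ∑' k : ℕ, w (N * (k + 1)) * R ^ (k + 1)
      ≤ ∑' m : ℕ, R / R ^ N * (w (m + 1) * R ^ (m + 1)) :=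
        hdilated.tsum_le_tsum_of_inj idx hidx_inj
          (fun m _ => by have := hw (m + 1); positivity) hterm (hsum.mul_left _)
    _ = R / R ^ N * ∑' k : ℕ, w (k + 1) * R ^ (k + 1) := tsum_mul_left

theorem tendsto_div_pow_two_pow_atTop {R : ℝ} (hR : 1 < R) :
    Tendsto (fun n : ℕ => R / R ^ (2 ^ n)) atTop (nhds 0) :=
  tendsto_const_nhds.div_atTop <| (tendsto_pow_atTop_atTop_of_one_lt hR).comp
    (tendsto_pow_atTop_atTop_of_one_lt one_lt_two)

/-- Superconvergence of the iterated direct images under `F(z) = z²`: for a Laurent form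
`φ = (Σ_k a_k z^k) dz/z` with `‖φ‖ = |a₀| + Σ_{k≥1}(|a_k|+|a_{-k}|)R^k < ∞`, the `n`-th
iterate `(F_*)ⁿφ` has coefficients `a_{2ⁿk}` and
`‖(F_*)ⁿφ - a₀ dz/z‖ ≤ (R/R^{2ⁿ})‖φ‖` for `n ≥ 1`; in particular
`‖(F_*)ⁿφ - a₀ dz/z‖ → 0`. -/
theorem squaring_superconvergence (R : ℝ) (hR : 1 < R) (a : ℤ → ℂ)
    (hsum : Summable (fun k : ℕ =>
      (‖a (k + 1 : ℕ)‖ + ‖a (-(k + 1 : ℕ) : ℤ)‖) * R ^ (k + 1))) :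
    (∀ n : ℕ, 1 ≤ n →
      ∑' k : ℕ, (‖a ((2 ^ n : ℤ) * (k + 1 : ℕ))‖ + ‖a (-((2 ^ n : ℤ) * (k + 1 : ℕ)))‖)
          * R ^ (k + 1)
        ≤ (R / R ^ (2 ^ n)) *
          (‖a 0‖ + ∑' k : ℕ, (‖a (k + 1 : ℕ)‖ + ‖a (-(k + 1 : ℕ) : ℤ)‖) * R ^ (k + 1))) ∧
    Tendsto (fun n : ℕ =>
        ∑' k : ℕ, (‖a ((2 ^ n : ℤ) * (k + 1 : ℕ))‖ + ‖a (-((2 ^ n : ℤ) * (k + 1 : ℕ)))‖)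
          * R ^ (k + 1))
      atTop (nhds 0) := by
  have hR0 : 0 < R := zero_lt_one.trans hR
  have hcast : ∀ n k : ℕ, (2 ^ n : ℤ) * ((k + 1 : ℕ) : ℤ) = ((2 ^ n * (k + 1) : ℕ) : ℤ) :=
    fun n k => by push_cast; ring
  have hbound : ∀ n : ℕ,
      ∑' k : ℕ, (‖a ((2 ^ n : ℤ) * (k + 1 : ℕ))‖ + ‖a (-((2 ^ n : ℤ) * (k + 1 : ℕ)))‖)
          * R ^ (k + 1)
        ≤ R / R ^ (2 ^ n) * ∑' k : ℕ, (‖a (k + 1 : ℕ)‖ + ‖a (-(k + 1 : ℕ) : ℤ)‖) * R ^ (k + 1) :=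
    fun n => by
      simp only [hcast]
      exact tsum_dilate_le (w := fun m : ℕ => ‖a m‖ + ‖a (-(m : ℤ))‖) hR.le (by positivity)
        (fun m => by positivity) hsum
  refine ⟨fun n _ => (hbound n).trans ?_, ?_⟩
  · exact mul_le_mul_of_nonneg_left (le_add_of_nonneg_left (norm_nonneg _)) (by positivity)
  · refine squeeze_zero (fun n => tsum_nonneg fun k => by positivity) hbound ?_
    simpa using (tendsto_div_pow_two_pow_atTop hR).mul_const _
end

section
/- Let R > 1 and let f(z) = Σ_{k∈ℤ} a_k z^{k-1} be analytic on the annulus A = {1/R < |z| < R} with |a₀| + Σ_{k=1}^∞ (|a_k| + |a_{-k}|) R^k < ∞. Then the iterated direct images under F(z) = z², namely g_n(z) = Σ_{k∈ℤ} a_{2ⁿk} z^{k-1}, converge uniformly on compact subsets of A to a₀/z, where a₀ = (1/(2πi)) ∮_{|z|=1} f(z) dz. -/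
/-!
The weighted summability gives `‖a m‖ ≤ C R^{-|m|}`, and a compact subset of the annulus lies in
`ρ⁻¹ ≤ ‖z‖ ≤ ρ` for some `ρ`. There the `k`-th term of `gₙ z - a₀/z` is bounded by
`C ρ (ρ / R^{2ⁿ})^{|k|}` for `k ≠ 0`, a two-sided geometric series whose sum tends to `0` because
`R^{2ⁿ} → ∞`. The formula for `a₀` comes from integrating the Laurent series termwise: only the
term `a₀ z⁻¹` has a nonzero integral over the unit circle.
-/

open Filter Metric Topology Complex Real MeasureTheory

theorem tendstoUniformlyOn_of_eventually_dist_le {ι α β : Type*} [PseudoMetricSpace β]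
    {F : ι → α → β} {f : α → β} {l : Filter ι} {s : Set α} {b : ι → ℝ}
    (hb : Tendsto b l (𝓝 0)) (h : ∀ᶠ i in l, ∀ x ∈ s, dist (f x) (F i x) ≤ b i) :
    TendstoUniformlyOn F f l s :=
  Metric.tendstoUniformlyOn_iff.2 fun _ hε =>
    (h.and (hb.eventually_lt_const hε)).mono fun _ hi x hx => (hi.1 x hx).trans_lt hi.2

theorem summable_of_nonneg_of_summable_succ_add_neg_succ {u : ℤ → ℝ} (hu : ∀ k, 0 ≤ u k)
    (h : Summable fun k : ℕ => u (k + 1 : ℕ) + u (-(k + 1 : ℕ) : ℤ)) : Summable u := by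
  refine .of_nat_of_neg_add_one ((summable_nat_add_iff 1).1 ?_) ?_
  · exact h.of_nonneg_of_le (fun k => hu _) fun k => le_add_of_nonneg_right (hu _)
  · exact_mod_cast h.of_nonneg_of_le (fun k => hu _) fun k => le_add_of_nonneg_left (hu _)

theorem norm_zpow_le_pow_natAbs {𝕜 : Type*} [NormedDivisionRing 𝕜] {z : 𝕜} {ρ : ℝ}
    (h : ‖z‖ ≤ ρ) (h' : ‖z‖⁻¹ ≤ ρ) (m : ℤ) : ‖z ^ m‖ ≤ ρ ^ m.natAbs := by
  obtain ⟨n, rfl | rfl⟩ := Int.eq_nat_or_neg m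
  · simpa using pow_le_pow_left₀ (norm_nonneg z) h n
  · simpa using pow_le_pow_left₀ (inv_nonneg.2 (norm_nonneg z)) h' n

theorem hasSum_pow_natAbs {q : ℝ} (hq0 : 0 ≤ q) (hq1 : q < 1) :
    HasSum (fun k : ℤ => q ^ k.natAbs) ((1 + q) / (1 - q)) := by
  have hgeom := hasSum_geometric_of_lt_one hq0 hq1
  have hneg : HasSum (fun n : ℕ => q ^ (-((n : ℤ) + 1)).natAbs) (q * (1 - q)⁻¹) := by
    have hterm : (fun n : ℕ => q ^ (-((n : ℤ) + 1)).natAbs) = fun n => q * q ^ n :=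
      funext fun n => by rw [← pow_succ']; congr 1
    rw [hterm]
    exact hgeom.mul_left q
  convert (hgeom.of_nat_of_neg_add_one hneg : HasSum (fun k : ℤ => q ^ k.natAbs) _) using 1
  ring

theorem norm_sub_le_of_hasSum_of_norm_le_pow_natAbs {E : Type*} [SeminormedAddCommGroup E]
    {c : ℤ → E} {S : E} (hc : HasSum c S) {M q : ℝ} (hq0 : 0 ≤ q) (hq1 : q < 1)
    (hbound : ∀ k ≠ 0, ‖c k‖ ≤ M * q ^ k.natAbs) :
    ‖S - c 0‖ ≤ M * ((1 + q) / (1 - q) - 1) := by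
  have hc' := hc.update 0 0
  have hM := ((hasSum_pow_natAbs hq0 hq1).mul_left M).update 0 0
  rw [zero_sub, neg_add_eq_sub] at hc' hM
  refine (hc'.norm_le_of_bounded hM fun k => ?_).trans_eq <| by
    simp only [Int.natAbs_zero, pow_zero]; ring
  rcases eq_or_ne k 0 with rfl | hk
  · simp
  · simpa [Function.update_of_ne hk] using hbound k hk

theorem IsCompact.exists_forall_norm_le_and_inv_norm_le {E : Type*} [NormedAddGroup E]
    {K : Set E} (hKc : IsCompact K) (hK0 : (0 : E) ∉ K) :
    ∃ ρ, ∀ z ∈ K, ‖z‖ ≤ ρ ∧ ‖z‖⁻¹ ≤ ρ := by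
  have hcont : ContinuousOn (fun z : E => max ‖z‖ ‖z‖⁻¹) K :=
    continuous_norm.continuousOn.sup <| continuous_norm.continuousOn.inv₀ fun z hz =>
      norm_ne_zero_iff.2 (ne_of_mem_of_not_mem hz hK0)
  obtain ⟨ρ, hρ⟩ := hKc.bddAbove_image hcont
  exact ⟨ρ, fun z hz => max_le_iff.1 (hρ ⟨z, hz, rfl⟩)⟩

theorem circleIntegral_eq_of_hasSum_laurent {a : ℤ → ℂ} {f : ℂ → ℂ} {c : ℂ} {r : ℝ} (hr : 0 < r)
    (ha : Summable fun k : ℤ => ‖a k‖ * r ^ k)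
    (hf : ∀ z ∈ sphere c r, HasSum (fun k : ℤ => a k * (z - c) ^ (k - 1)) (f z)) :
    ∮ z in C(c, r), f z = 2 * π * I * a 0 := by
  have hterm : ∀ k : ℤ, (∮ z in C(c, r), a k * (z - c) ^ (k - 1)) =
      if k = 0 then 2 * π * I * a 0 else 0 := by
    intro k
    rw [circleIntegral.integral_const_mul]
    split_ifs with hk
    · simp [hk, hr.ne', mul_comm]
    · rw [circleIntegral.integral_sub_zpow_of_ne (by omega), mul_zero]
  have hsum : HasSum (fun k : ℤ => ∮ z in C(c, r), a k * (z - c) ^ (k - 1))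
      (∮ z in C(c, r), f z) := by
    refine intervalIntegral.hasSum_integral_of_dominated_convergence (fun k _ => ‖a k‖ * r ^ k)
      (fun k => ?_) (fun k => ?_) (ae_of_all _ fun _ _ => ha) intervalIntegrable_const
      (ae_of_all _ fun θ _ => (hf _ (circleMap_mem_sphere c hr.le θ)).const_smul _)
    · have hc : c ∉ sphere c |r| := by simp [abs_of_pos hr, hr.ne]
      have : CircleIntegrable (fun z => a k * (z - c) ^ (k - 1)) c r :=
        (circleIntegrable_sub_zpow_iff.2 <| .inr <| .inr hc).const_mul _
      exact (intervalIntegrable_iff.1 this.out).aestronglyMeasurable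
    · refine ae_of_all _ fun θ _ => le_of_eq ?_
      dsimp only
      rw [circleMap_sub_center, norm_smul, norm_mul, norm_zpow, deriv_circleMap, norm_mul,
        norm_circleMap_zero, abs_of_pos hr, norm_I, mul_one, mul_left_comm,
        ← zpow_one_add₀ hr.ne', add_sub_cancel]
  simp only [hterm] at hsum
  exact hsum.unique (hasSum_ite_eq 0 _)

theorem norm_mul_zpow_sub_one_le {𝕜 : Type*} [NormedDivisionRing 𝕜] {a : ℤ → 𝕜} {R C ρ : ℝ}
    (hR : 0 < R) (hC : ∀ m, ‖a m‖ * R ^ m.natAbs ≤ C) {z : 𝕜} (hz0 : z ≠ 0) (hz : ‖z‖ ≤ ρ)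
    (hz' : ‖z‖⁻¹ ≤ ρ) (N k : ℤ) :
    ‖a (N * k) * z ^ (k - 1)‖ ≤ C * ρ * (ρ / R ^ N.natAbs) ^ k.natAbs := by
  have hρ : 0 ≤ ρ := (norm_nonneg z).trans hz
  have hC0 : 0 ≤ C := (norm_nonneg (a 0)).trans (by simpa using hC 0)
  have ha : ‖a (N * k)‖ ≤ C / R ^ (N.natAbs * k.natAbs) := by
    rw [le_div_iff₀ (by positivity), ← Int.natAbs_mul]
    exact hC _
  have hzk : ‖z ^ (k - 1)‖ ≤ ρ ^ k.natAbs * ρ := by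
    rw [zpow_sub_one₀ hz0, norm_mul, norm_inv]
    exact mul_le_mul (norm_zpow_le_pow_natAbs hz hz' k) hz' (by positivity) (by positivity)
  calc ‖a (N * k) * z ^ (k - 1)‖ = ‖a (N * k)‖ * ‖z ^ (k - 1)‖ := norm_mul _ _
    _ ≤ C / R ^ (N.natAbs * k.natAbs) * (ρ ^ k.natAbs * ρ) :=
      mul_le_mul ha hzk (norm_nonneg _) (by positivity)
    _ = C * ρ * (ρ / R ^ N.natAbs) ^ k.natAbs := by rw [div_pow, pow_mul]; ring

theorem norm_sub_div_le_of_hasSum_dilate {𝕜 : Type*} [NormedDivisionRing 𝕜] {a : ℤ → 𝕜}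
    {R C ρ : ℝ} (hR : 0 < R) (hC : ∀ m, ‖a m‖ * R ^ m.natAbs ≤ C) {z w : 𝕜} (hz0 : z ≠ 0)
    (hz : ‖z‖ ≤ ρ) (hz' : ‖z‖⁻¹ ≤ ρ) {N : ℤ} (hw : HasSum (fun k => a (N * k) * z ^ (k - 1)) w)
    (hq : ρ / R ^ N.natAbs < 1) :
    ‖w - a 0 / z‖ ≤ C * ρ * ((1 + ρ / R ^ N.natAbs) / (1 - ρ / R ^ N.natAbs) - 1) := by
  have hq0 : 0 ≤ ρ / R ^ N.natAbs := div_nonneg ((norm_nonneg z).trans hz) (by positivity)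
  simpa [div_eq_mul_inv] using norm_sub_le_of_hasSum_of_norm_le_pow_natAbs hw hq0 hq
    fun k _ => norm_mul_zpow_sub_one_le hR hC hz0 hz hz' N k

/-- The iterated direct images `gₙ(z) = Σ_k a_{2ⁿk} z^{k-1}` under `F(z) = z²` of an
analytic 1-form `f(z)dz = (Σ_k a_k z^{k-1}) z dz/z` on the annulus `1/R < |z| < R`
(with summable weighted coefficients) converge uniformly on compact subsets of the
annulus to `a₀/z`, where `a₀ = (1/(2πi)) ∮_{|z|=1} f(z) dz`. -/
theorem iterated_direct_images_converge (R : ℝ) (hR : 1 < R)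
    (a : ℤ → ℂ) (f : ℂ → ℂ) (g : ℕ → ℂ → ℂ)
    (hnorm : Summable (fun k : ℕ =>
      (‖a (k + 1 : ℕ)‖ + ‖a (-(k + 1 : ℕ) : ℤ)‖) * R ^ (k + 1)))
    (hf : ∀ z : ℂ, 1 / R < ‖z‖ → ‖z‖ < R →
      HasSum (fun k : ℤ => a k * z ^ (k - 1)) (f z))
    (hg : ∀ n : ℕ, ∀ z : ℂ, 1 / R < ‖z‖ → ‖z‖ < R →
      HasSum (fun k : ℤ => a ((2 ^ n : ℤ) * k) * z ^ (k - 1)) (g n z)) :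
    a 0 = (1 / (2 * (Real.pi : ℂ) * Complex.I)) * (∮ z in C(0, 1), f z) ∧
    ∀ K : Set ℂ, K ⊆ {z : ℂ | 1 / R < ‖z‖ ∧ ‖z‖ < R} →
      IsCompact K →
      TendstoUniformlyOn (fun n z => g n z) (fun z => a 0 / z) atTop K := by
  have hR0 : 0 < R := one_pos.trans hR
  have hu : Summable fun k : ℤ => ‖a k‖ * R ^ k.natAbs :=
    summable_of_nonneg_of_summable_succ_add_neg_succ (fun k => by positivity)
      (by simpa only [add_mul, Int.natAbs_neg, Int.natAbs_natCast] using hnorm)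
  refine ⟨?_, fun K hK hKc => ?_⟩
  · have ha : Summable fun k : ℤ => ‖a k‖ * (1 : ℝ) ^ k := by
      simpa using hu.of_nonneg_of_le (fun _ => norm_nonneg _)
        fun k => le_mul_of_one_le_right (norm_nonneg _) (one_le_pow₀ hR.le)
    have hcirc := circleIntegral_eq_of_hasSum_laurent one_pos ha (f := f) (c := 0) fun z hz => by
      have hz1 : ‖z‖ = 1 := by simpa using hz
      simpa using hf z (by rw [hz1, div_lt_one hR0]; exact hR) (by rw [hz1]; exact hR)
    rw [hcirc]
    field_simp
  · have hK0 : (0 : ℂ) ∉ K := fun h0 => by simpa using (one_div_pos.2 hR0).trans (hK h0).1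
    obtain ⟨ρ, hKρ⟩ := hKc.exists_forall_norm_le_and_inv_norm_le hK0
    obtain ⟨C, hC⟩ : ∃ C, ∀ m, ‖a m‖ * R ^ m.natAbs ≤ C :=
      ⟨_, fun m => hu.le_tsum m fun _ _ => by positivity⟩
    have hq : Tendsto (fun n : ℕ => ρ / R ^ 2 ^ n) atTop (𝓝 0) := tendsto_const_nhds.div_atTop
      ((tendsto_pow_atTop_atTop_of_one_lt hR).comp (tendsto_pow_atTop_atTop_of_one_lt one_lt_two))
    have hbound := ((show ContinuousAt (fun x : ℝ => C * ρ * ((1 + x) / (1 - x) - 1)) 0 by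
      fun_prop (disch := norm_num)).tendsto.comp hq)
    simp only [add_zero, sub_zero, div_one, sub_self, mul_zero] at hbound
    refine tendstoUniformlyOn_of_eventually_dist_le hbound ?_
    filter_upwards [hq.eventually_lt_const one_pos] with n hq1 z hz
    rw [dist_comm, dist_eq_norm]
    exact norm_sub_div_le_of_hasSum_dilate hR0 hC (ne_of_mem_of_not_mem hz hK0)
      (hKρ z hz).1 (hKρ z hz).2 (hg n z (hK hz).1 (hK hz).2) (by simpa using hq1)
end

section
/- Let R = P/Q be a real rational function with Q having no real zeros and deg P ≤ deg Q - 2. Define R₀ = R and R_{n+1} = π_*R_n, where (π_*S)(w) = S(σ₊(w))σ₊'(w) + S(σ₋(w))σ₋'(w) with σ±(w) = w ± √(w²+1). Then each R_n is a rational function with no real poles, and R_n converges uniformly on compact subsets of ℝ to (1/π)·(∫_{-∞}^∞ R(z)dz)·1/(1+x²). -/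
open MeasureTheory Filter

set_option maxRecDepth 8000

section Aux
open Polynomial Finset Real MeasureTheory
/-- `(w+s)^k = (ab k).1 w + (ab k).2 w * s` where `s^2 = w^2+1`. -/
noncomputable def ab : ℕ → Polynomial ℝ × Polynomial ℝ
  | 0 => (1, 0)
  | (k+1) => (X * (ab k).1 + (X^2+1) * (ab k).2, (ab k).1 + X * (ab k).2)

lemma sq_s (w : ℝ) : Real.sqrt (w ^ 2 + 1) ^ 2 = w ^ 2 + 1 :=
  Real.sq_sqrt (by positivity)

lemma s_pos (w : ℝ) : 0 < Real.sqrt (w ^ 2 + 1) := Real.sqrt_pos.2 (by positivity)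

lemma ab_eval_plus (w : ℝ) (k : ℕ) :
    (w + Real.sqrt (w ^ 2 + 1)) ^ k
      = ((ab k).1.eval w) + ((ab k).2.eval w) * Real.sqrt (w ^ 2 + 1) := by
  induction k with
  | zero => simp [ab]
  | succ k ih =>
      rw [pow_succ, ih, ab]
      have h := sq_s w
      simp only [eval_add, eval_mul, eval_X, eval_pow, eval_one]
      linear_combination (eval w (ab k).2) * h

lemma ab_eval_minus (w : ℝ) (k : ℕ) :
    (w - Real.sqrt (w ^ 2 + 1)) ^ k
      = ((ab k).1.eval w) - ((ab k).2.eval w) * Real.sqrt (w ^ 2 + 1) := by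
  induction k with
  | zero => simp [ab]
  | succ k ih =>
      rw [pow_succ, ih, ab]
      have h := sq_s w
      simp only [eval_add, eval_mul, eval_X, eval_pow, eval_one]
      linear_combination (eval w (ab k).2) * h

noncomputable def polA (P : Polynomial ℝ) : Polynomial ℝ :=
  ∑ k ∈ Finset.range (P.natDegree + 1), Polynomial.C (P.coeff k) * (ab k).1

noncomputable def polB (P : Polynomial ℝ) : Polynomial ℝ :=
  ∑ k ∈ Finset.range (P.natDegree + 1), Polynomial.C (P.coeff k) * (ab k).2

lemma eval_plus (P : Polynomial ℝ) (w : ℝ) :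
    P.eval (w + Real.sqrt (w ^ 2 + 1))
      = (polA P).eval w + (polB P).eval w * Real.sqrt (w ^ 2 + 1) := by
  rw [Polynomial.eval_eq_sum_range, polA, polB, Polynomial.eval_finset_sum,
    Polynomial.eval_finset_sum, Finset.sum_mul, ← Finset.sum_add_distrib]
  refine Finset.sum_congr rfl fun k _ => ?_
  rw [ab_eval_plus]
  simp only [eval_mul, eval_C]
  ring

lemma eval_minus (P : Polynomial ℝ) (w : ℝ) :
    P.eval (w - Real.sqrt (w ^ 2 + 1))
      = (polA P).eval w - (polB P).eval w * Real.sqrt (w ^ 2 + 1) := by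
  rw [Polynomial.eval_eq_sum_range, polA, polB, Polynomial.eval_finset_sum,
    Polynomial.eval_finset_sum, Finset.sum_mul, ← Finset.sum_sub_distrib]
  refine Finset.sum_congr rfl fun k _ => ?_
  rw [ab_eval_minus]
  simp only [eval_mul, eval_C]
  ring

noncomputable def nextP (P Q : Polynomial ℝ) : Polynomial ℝ :=
  2 * (polA P * polA Q - (X^2+1) * polB P * polB Q
      + X * (polB P * polA Q - polA P * polB Q))

noncomputable def nextQ (Q : Polynomial ℝ) : Polynomial ℝ :=
  (polA Q)^2 - (X^2+1) * (polB Q)^2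

lemma nextQ_eval (Q : Polynomial ℝ) (w : ℝ) :
    (nextQ Q).eval w
      = Q.eval (w + Real.sqrt (w ^ 2 + 1)) * Q.eval (w - Real.sqrt (w ^ 2 + 1)) := by
  rw [eval_plus, eval_minus, nextQ]
  have h := sq_s w
  simp only [eval_sub, eval_mul, eval_pow, eval_add, eval_X, eval_one]
  linear_combination ((eval w (polB Q))^2) * h

lemma nextQ_ne (Q : Polynomial ℝ) (hQ : ∀ x : ℝ, Q.eval x ≠ 0) (w : ℝ) :
    (nextQ Q).eval w ≠ 0 := by
  rw [nextQ_eval]; exact mul_ne_zero (hQ _) (hQ _)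

lemma pushforward_rat (P Q : Polynomial ℝ) (hQ : ∀ x : ℝ, Q.eval x ≠ 0) (w : ℝ) :
    pushforward (fun x => P.eval x / Q.eval x) w
      = (nextP P Q).eval w / (nextQ Q).eval w := by
  have hs := s_pos w
  have hs2 := sq_s w
  have h1 : Q.eval (w + Real.sqrt (w ^ 2 + 1)) ≠ 0 := hQ _
  have h2 : Q.eval (w - Real.sqrt (w ^ 2 + 1)) ≠ 0 := hQ _
  rw [pushforward, eval_plus, eval_minus, eval_plus, eval_minus, nextQ_eval, eval_plus,
    eval_minus, nextP]
  rw [eval_plus] at h1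
  rw [eval_minus] at h2
  simp only [eval_mul, eval_ofNat, eval_add, eval_sub, eval_pow, eval_X, eval_one]
  set s := Real.sqrt (w ^ 2 + 1) with hsdef
  have hs' := hs.ne'
  field_simp
  have hA : eval w (polA Q) + s * eval w (polB Q) ≠ 0 := by rwa [mul_comm s]
  have hB : eval w (polA Q) - s * eval w (polB Q) ≠ 0 := by rwa [mul_comm s]
  rw [div_add_div _ _ hA hB, div_eq_div_iff (mul_ne_zero hA hB) (mul_ne_zero hA hB)]
  linear_combination (-2 * eval w (polB P) * eval w (polB Q) * s *
    ((eval w (polA Q) + s * eval w (polB Q)) * (eval w (polA Q) - s * eval w (polB Q)))) * hs2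

noncomputable def Pt (P Q : Polynomial ℝ) (θ : ℝ) : ℝ :=
  ∑ k ∈ Finset.range (Q.natDegree - 1),
    P.coeff k * Real.cos θ ^ k * Real.sin θ ^ (Q.natDegree - 2 - k)

noncomputable def Qt (Q : Polynomial ℝ) (θ : ℝ) : ℝ :=
  ∑ k ∈ Finset.range (Q.natDegree + 1),
    Q.coeff k * Real.cos θ ^ k * Real.sin θ ^ (Q.natDegree - k)

noncomputable def Ff (P Q : Polynomial ℝ) (θ : ℝ) : ℝ := Pt P Q θ / Qt Q θ

lemma hd2 {P Q : Polynomial ℝ} (hdeg : P.degree + 2 ≤ Q.degree) (hP : P ≠ 0) :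
    2 ≤ Q.natDegree := by
  have h0 : (0 : WithBot ℕ) ≤ P.degree := zero_le_degree_iff.2 hP
  have h2 : ((2:ℕ) : WithBot ℕ) ≤ Q.degree := by
    calc ((2:ℕ) : WithBot ℕ) = 0 + 2 := by norm_num
    _ ≤ P.degree + 2 := by exact add_le_add_left h0 2
    _ ≤ Q.degree := hdeg
  have hQ0 : Q ≠ 0 := by
    rintro rfl
    simp at h2
  rw [Polynomial.degree_eq_natDegree hQ0] at h2
  exact_mod_cast h2

lemma hPcoeff {P Q : Polynomial ℝ} (hdeg : P.degree + 2 ≤ Q.degree) (hP : P ≠ 0) :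
    P.natDegree + 2 ≤ Q.natDegree := by
  have hQ0 : Q ≠ 0 := by
    rintro rfl
    rw [Polynomial.degree_zero, Polynomial.degree_eq_natDegree hP] at hdeg
    exact absurd hdeg (by
      intro h
      simpa using h.trans_lt (by norm_num : (⊥ : WithBot ℕ) < 0))
  rw [Polynomial.degree_eq_natDegree hP, Polynomial.degree_eq_natDegree hQ0] at hdeg
  exact_mod_cast hdeg

lemma Qt_eq {Q : Polynomial ℝ} (hQ0 : Q ≠ 0) {θ : ℝ} (hs : Real.sin θ ≠ 0) :
    Qt Q θ = Real.sin θ ^ Q.natDegree * Q.eval (Real.cos θ / Real.sin θ) := by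
  rw [Polynomial.eval_eq_sum_range, Finset.mul_sum, Qt]
  refine Finset.sum_congr rfl fun k hk => ?_
  rw [Finset.mem_range, Nat.lt_succ_iff] at hk
  have hpow : Real.sin θ ^ (Q.natDegree - k) * Real.sin θ ^ k = Real.sin θ ^ Q.natDegree := by
    rw [← pow_add, Nat.sub_add_cancel hk]
  rw [div_pow]
  field_simp
  linear_combination (Q.coeff k * Real.cos θ ^ k) * hpow

lemma Pt_eq {P Q : Polynomial ℝ} (hdeg : P.degree + 2 ≤ Q.degree) (hP : P ≠ 0)
    {θ : ℝ} (hs : Real.sin θ ≠ 0) :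
    Pt P Q θ = Real.sin θ ^ (Q.natDegree - 2) * P.eval (Real.cos θ / Real.sin θ) := by
  have hle := hPcoeff hdeg hP
  have hlt : P.natDegree < Q.natDegree - 1 := by omega
  rw [Polynomial.eval_eq_sum_range' hlt, Finset.mul_sum, Pt]
  refine Finset.sum_congr rfl fun k hk => ?_
  rw [Finset.mem_range] at hk
  have hk2 : k ≤ Q.natDegree - 2 := by omega
  have hpow : Real.sin θ ^ (Q.natDegree - 2 - k) * Real.sin θ ^ k
      = Real.sin θ ^ (Q.natDegree - 2) := by
    rw [← pow_add, Nat.sub_add_cancel hk2]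
  rw [div_pow]
  field_simp
  linear_combination (P.coeff k * Real.cos θ ^ k) * hpow

lemma Qt_ne {Q : Polynomial ℝ} (hQ : ∀ x : ℝ, Q.eval x ≠ 0) (θ : ℝ) : Qt Q θ ≠ 0 := by
  have hQ0 : Q ≠ 0 := fun h => hQ 0 (by simp [h])
  by_cases hs : Real.sin θ = 0
  · have hc : Real.cos θ ≠ 0 := by
      intro hc
      have := Real.sin_sq_add_cos_sq θ
      rw [hs, hc] at this; norm_num at this
    rw [Qt]
    have : ∀ k ∈ Finset.range (Q.natDegree + 1),
        Q.coeff k * Real.cos θ ^ k * Real.sin θ ^ (Q.natDegree - k)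
          = if k = Q.natDegree then Q.coeff k * Real.cos θ ^ k else 0 := by
      intro k hk
      rw [Finset.mem_range, Nat.lt_succ_iff] at hk
      by_cases h : k = Q.natDegree
      · simp [h, hs]
      · rw [if_neg h, hs, zero_pow (by omega), mul_zero]
    rw [Finset.sum_congr rfl this, Finset.sum_ite_eq' _ (Q.natDegree)]
    simp only [Finset.mem_range, Nat.lt_succ_iff, le_refl, if_true]
    exact mul_ne_zero (Polynomial.leadingCoeff_ne_zero.2 hQ0) (pow_ne_zero _ hc)
  · rw [Qt_eq hQ0 hs]
    exact mul_ne_zero (pow_ne_zero _ hs) (hQ _)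

lemma Pt_cont (P Q : Polynomial ℝ) : Continuous (Pt P Q) := by
  unfold Pt
  exact continuous_finset_sum _ fun k _ => by fun_prop

lemma Qt_cont (Q : Polynomial ℝ) : Continuous (Qt Q) := by
  unfold Qt
  exact continuous_finset_sum _ fun k _ => by fun_prop

lemma Ff_cont {P Q : Polynomial ℝ} (hQ : ∀ x : ℝ, Q.eval x ≠ 0) : Continuous (Ff P Q) :=
  (Pt_cont P Q).div (Qt_cont Q) (Qt_ne hQ)

/-- base identity : for sin θ > 0, `P/Q (cot θ) = F θ * sin² θ`. -/
lemma base_id {P Q : Polynomial ℝ} (hQ : ∀ x : ℝ, Q.eval x ≠ 0)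
    (hdeg : P.degree + 2 ≤ Q.degree) (hP : P ≠ 0) {θ : ℝ} (hs : Real.sin θ ≠ 0) :
    P.eval (Real.cos θ / Real.sin θ) / Q.eval (Real.cos θ / Real.sin θ)
      = Ff P Q θ * Real.sin θ ^ 2 := by
  have hQ0 : Q ≠ 0 := fun h => hQ 0 (by simp [h])
  have h2 := hd2 hdeg hP
  rw [Ff, Pt_eq hdeg hP hs, Qt_eq hQ0 hs]
  rw [div_mul_eq_mul_div, div_eq_div_iff (hQ _) (mul_ne_zero (pow_ne_zero _ hs) (hQ _))]
  have : Real.sin θ ^ Q.natDegree = Real.sin θ ^ (Q.natDegree - 2) * Real.sin θ ^ 2 := by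
    rw [← pow_add, Nat.sub_add_cancel h2]
  rw [this]; ring

lemma sum_split (m : ℕ) (f : ℕ → ℝ) :
    ∑ j ∈ Finset.range (2 * m), f j = ∑ k ∈ Finset.range m, (f (2 * k) + f (2 * k + 1)) := by
  induction m with
  | zero => simp
  | succ m ih =>
      rw [Finset.sum_range_succ, ← ih, Nat.mul_succ, Finset.sum_range_succ, Finset.sum_range_succ]
      ring_nf

-- basic half-angle data for θ ∈ (0, π)
lemma half_data {θ : ℝ} (h0 : 0 < θ) (h1 : θ < Real.pi) :
    Real.sin θ = 2 * Real.sin (θ/2) * Real.cos (θ/2) ∧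
    Real.cos θ = 2 * Real.cos (θ/2)^2 - 1 ∧
    0 < Real.sin (θ/2) ∧ 0 < Real.cos (θ/2) ∧ 0 < Real.sin θ := by
  have e1 : θ = 2 * (θ/2) := by ring
  refine ⟨?_, ?_, ?_, ?_, Real.sin_pos_of_pos_of_lt_pi h0 h1⟩
  · have := Real.sin_two_mul (θ/2); rw [← e1] at this; linarith
  · have := Real.cos_two_mul (θ/2); rw [← e1] at this; linarith
  · exact Real.sin_pos_of_pos_of_lt_pi (by linarith) (by linarith [Real.pi_pos])
  · exact Real.cos_pos_of_mem_Ioo ⟨by linarith [Real.pi_pos], by linarith⟩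

lemma sqrt_id {θ : ℝ} (h0 : 0 < θ) (h1 : θ < Real.pi) :
    Real.sqrt ((Real.cos θ / Real.sin θ) ^ 2 + 1) = 1 / Real.sin θ := by
  have hs := (half_data h0 h1).2.2.2.2
  have h : (Real.cos θ / Real.sin θ) ^ 2 + 1 = (1 / Real.sin θ)^2 := by
    field_simp
    exact Real.cos_sq_add_sin_sq θ
  rw [h, Real.sqrt_sq (by positivity)]
lemma claim {P Q : Polynomial ℝ} (hQ : ∀ x : ℝ, Q.eval x ≠ 0)
    (hdeg : P.degree + 2 ≤ Q.degree) (hP : P ≠ 0)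
    (R : ℕ → ℝ → ℝ) (hR0 : ∀ x, R 0 x = P.eval x / Q.eval x)
    (hrec : ∀ n, R (n + 1) = pushforward (R n)) :
    ∀ n θ, 0 < θ → θ < Real.pi →
      R n (Real.cos θ / Real.sin θ)
        = (∑ k ∈ Finset.range (2^n), Ff P Q ((θ + k * Real.pi)/2^n)) / 2^n
            * Real.sin θ ^ 2 := by
  intro n
  induction n with
  | zero =>
      intro θ h0 h1
      have hs := (half_data h0 h1).2.2.2.2
      rw [hR0, base_id hQ hdeg hP hs.ne']
      norm_num
  | succ n ih =>
      intro θ h0 h1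
      obtain ⟨e1, e2, hsp, hcp, hs⟩ := half_data h0 h1
      have hpi := Real.pi_pos
      have hw := sqrt_id h0 h1
      have hp1 : Real.cos θ / Real.sin θ + 1 / Real.sin θ
          = Real.cos (θ/2) / Real.sin (θ/2) := by
        rw [← add_div, e1, e2]
        field_simp
        ring
      have hp2 : Real.cos θ / Real.sin θ - 1 / Real.sin θ
          = Real.cos (θ/2 + Real.pi/2) / Real.sin (θ/2 + Real.pi/2) := by
        rw [Real.cos_add_pi_div_two, Real.sin_add_pi_div_two, div_sub_div_same, e1, e2]
        have h1 := Real.sin_sq_add_cos_sq (θ/2)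
        field_simp
        nlinarith [h1]
      have hf1 : 1 + (Real.cos θ / Real.sin θ) / (1 / Real.sin θ)
          = 2 * Real.cos (θ/2)^2 := by
        field_simp
        linarith [e2]
      have hf2 : 1 - (Real.cos θ / Real.sin θ) / (1 / Real.sin θ)
          = 2 * Real.sin (θ/2)^2 := by
        have h1 := Real.sin_sq_add_cos_sq (θ/2)
        field_simp
        nlinarith [h1, e2]
      have IH1 := ih (θ/2) (by linarith) (by linarith)
      have IH2 := ih (θ/2 + Real.pi/2) (by linarith) (by linarith)
      rw [hrec n, pushforward, hw, hp1, hp2, hf1, hf2, IH1, IH2]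
      rw [Real.sin_add_pi_div_two]
      have hsplit : ∑ k ∈ Finset.range (2^(n+1)), Ff P Q ((θ + k * Real.pi)/2^(n+1))
          = (∑ k ∈ Finset.range (2^n), Ff P Q ((θ/2 + k * Real.pi)/2^n))
            + ∑ k ∈ Finset.range (2^n), Ff P Q ((θ/2 + Real.pi/2 + k * Real.pi)/2^n) := by
        rw [pow_succ, mul_comm (2^n) 2, sum_split, Finset.sum_add_distrib]
        congr 1
        · refine Finset.sum_congr rfl fun k _ => ?_
          congr 1
          push_cast
          field_simp
          ring
        · refine Finset.sum_congr rfl fun k _ => ?_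
          congr 1
          push_cast
          field_simp
          ring
      rw [hsplit, e1]
      have h2n : (0:ℝ) < 2^n := by positivity
      generalize (∑ k ∈ Finset.range (2^n), Ff P Q ((θ/2 + k * Real.pi)/2^n)) = A
      generalize (∑ k ∈ Finset.range (2^n), Ff P Q ((θ/2 + Real.pi/2 + k * Real.pi)/2^n)) = B
      field_simp
      ring

lemma coord (x : ℝ) :
    0 < Real.pi/2 - Real.arctan x ∧ Real.pi/2 - Real.arctan x < Real.pi ∧
    Real.cos (Real.pi/2 - Real.arctan x) / Real.sin (Real.pi/2 - Real.arctan x) = x ∧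
    Real.sin (Real.pi/2 - Real.arctan x) ^ 2 = 1 / (1 + x^2) := by
  have h1 := Real.arctan_lt_pi_div_two x
  have h2 := Real.neg_pi_div_two_lt_arctan x
  have hc := Real.cos_arctan_pos x
  refine ⟨by linarith, by linarith, ?_, ?_⟩
  · rw [Real.cos_pi_div_two_sub, Real.sin_pi_div_two_sub, Real.sin_arctan, Real.cos_arctan]
    have hs : Real.sqrt (1 + x^2) > 0 := Real.sqrt_pos.2 (by positivity)
    field_simp
  · rw [Real.sin_pi_div_two_sub]
    exact Real.cos_sq_arctan x

lemma riemann {f : ℝ → ℝ} (hf : Continuous f) (hper : Function.Periodic f Real.pi)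
    {ε : ℝ} (hε : 0 < ε) :
    ∃ N : ℕ, ∀ n ≥ N, ∀ θ ∈ Set.Icc (0:ℝ) Real.pi,
      |(∑ k ∈ Finset.range (2^n), f ((θ + k * Real.pi)/2^n)) / 2^n
        - (∫ t in (0:ℝ)..Real.pi, f t) / Real.pi| ≤ ε := by
  have hpi := Real.pi_pos
  -- uniform continuity on [0, 2π]
  have huc : UniformContinuousOn f (Set.Icc 0 (2*Real.pi)) :=
    isCompact_Icc.uniformContinuousOn_of_continuous hf.continuousOn
  rw [Metric.uniformContinuousOn_iff] at huc
  obtain ⟨δ, hδ, hδ'⟩ := huc ε hε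
  obtain ⟨N, hN⟩ := pow_unbounded_of_one_lt (Real.pi/δ) (one_lt_two (α := ℝ))
  refine ⟨N, fun n hn θ hθ => ?_⟩
  have h2n : (0:ℝ) < 2^n := by positivity
  have hmesh : Real.pi / 2^n < δ := by
    rw [div_lt_iff₀ h2n]
    calc Real.pi = (Real.pi/δ) * δ := by field_simp
    _ < 2^N * δ := by exact mul_lt_mul_of_pos_right hN hδ
    _ ≤ 2^n * δ := by
        have : (2:ℝ)^N ≤ 2^n := pow_le_pow_right₀ one_le_two hn
        nlinarith
    _ = δ * 2^n := by ring
  set a : ℕ → ℝ := fun k => (θ + k * Real.pi)/2^n with ha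
  have hint : ∀ k < 2^n, IntervalIntegrable f volume (a k) (a (k+1)) :=
    fun k _ => hf.intervalIntegrable _ _
  have hsum := intervalIntegral.sum_integral_adjacent_intervals hint
  have ha2n : a (2^n) = a 0 + Real.pi := by
    simp only [ha]
    push_cast
    field_simp
    ring
  have hc : ∫ t in (a 0)..(a (2^n)), f t = ∫ t in (0:ℝ)..Real.pi, f t := by
    rw [ha2n]
    simpa using hper.intervalIntegral_add_eq (a 0) 0
  have hstep : ∀ k, a (k+1) = a k + Real.pi/2^n := by
    intro k; simp only [ha]; push_cast; field_simp; ring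
  have hmesh2 : Real.pi/2^n ≤ Real.pi := by
    exact div_le_self hpi.le (one_le_pow₀ one_le_two)
  have hmem : ∀ k < 2^n, a k ∈ Set.Icc (0:ℝ) (2*Real.pi) ∧ a k ≤ Real.pi := by
    intro k hk
    have hk' : (k:ℝ) ≤ 2^n - 1 := by
      have : (k:ℝ) + 1 ≤ 2^n := by exact_mod_cast Nat.succ_le_of_lt hk
      linarith
    have h0 : 0 ≤ a k := by
      have h1 := hθ.1
      have : (0:ℝ) ≤ θ + k * Real.pi := by positivity
      positivity
    have h2 : a k ≤ Real.pi := by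
      rw [ha, div_le_iff₀ h2n]
      have := hθ.2
      nlinarith
    exact ⟨⟨h0, by linarith⟩, h2⟩
  have hbound : ∀ k < 2^n,
      |(∫ t in (a k)..(a (k+1)), f t) - Real.pi/2^n * f (a k)| ≤ ε * (Real.pi/2^n) := by
    intro k hk
    have hak := hstep k
    have hmesh0 : 0 < Real.pi/2^n := by positivity
    have h1 : (∫ t in (a k)..(a (k+1)), f t) - Real.pi/2^n * f (a k)
        = ∫ t in (a k)..(a (k+1)), (f t - f (a k)) := by
      rw [intervalIntegral.integral_sub (hf.intervalIntegrable _ _) intervalIntegrable_const,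
        intervalIntegral.integral_const, hak]
      simp
    rw [h1]
    have hb := intervalIntegral.norm_integral_le_of_norm_le_const 
      (C := ε) (a := a k) (b := a (k+1)) (f := fun t => f t - f (a k)) ?_
    · rw [Real.norm_eq_abs] at hb
      refine hb.trans ?_
      rw [hak]
      simp only [add_sub_cancel_left]
      rw [abs_of_pos hmesh0]
    · intro t ht
      rw [Set.uIoc_of_le (by rw [hak]; linarith)] at ht
      obtain ⟨hmemk, hakpi⟩ := hmem k hk
      have ht1 : a k < t := ht.1
      have ht2 : t ≤ a k + Real.pi/2^n := by rw [← hak]; exact ht.2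
      have htmem : t ∈ Set.Icc (0:ℝ) (2*Real.pi) := by
        constructor
        · linarith [hmemk.1]
        · linarith
      have hd : dist t (a k) < δ := by
        rw [Real.dist_eq, abs_of_pos (by linarith)]
        linarith
      have := hδ' t htmem (a k) hmemk hd
      rw [Real.dist_eq] at this
      exact le_of_lt this
  have key : |(∑ k ∈ Finset.range (2^n), Real.pi/2^n * f (a k))
      - ∫ t in (0:ℝ)..Real.pi, f t| ≤ ε * Real.pi := by
    rw [← hc, ← hsum, ← Finset.sum_sub_distrib]
    refine (Finset.abs_sum_le_sum_abs _ _).trans ?_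
    have : ∀ k ∈ Finset.range (2^n),
        |Real.pi/2^n * f (a k) - ∫ t in (a k)..(a (k+1)), f t| ≤ ε * (Real.pi/2^n) := by
      intro k hk
      rw [abs_sub_comm]
      exact hbound k (Finset.mem_range.1 hk)
    refine (Finset.sum_le_sum this).trans ?_
    rw [Finset.sum_const, Finset.card_range, nsmul_eq_mul]
    push_cast
    have : (2:ℝ)^n * (ε * (Real.pi/2^n)) = ε * Real.pi := by field_simp
    linarith [this.le]
  have heq : (∑ k ∈ Finset.range (2^n), f ((θ + k * Real.pi)/2^n)) / 2^n
      - (∫ t in (0:ℝ)..Real.pi, f t) / Real.pi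
      = ((∑ k ∈ Finset.range (2^n), Real.pi/2^n * f (a k))
          - ∫ t in (0:ℝ)..Real.pi, f t) / Real.pi := by
    rw [← Finset.mul_sum]
    simp only [ha]
    generalize (∑ k ∈ Finset.range (2^n), f ((θ + k * Real.pi)/2^n)) = A
    field_simp
  rw [heq, abs_div, abs_of_pos hpi, div_le_iff₀ hpi]
  linarith [key]
lemma Ff_periodic {P Q : Polynomial ℝ} (h2 : 2 ≤ Q.natDegree) :
    Function.Periodic (Ff P Q) Real.pi := by
  intro θ
  have hPt : Pt P Q (θ + Real.pi) = (-1)^Q.natDegree * Pt P Q θ := by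
    rw [Pt, Pt, Finset.mul_sum]
    refine Finset.sum_congr rfl fun k hk => ?_
    rw [Finset.mem_range] at hk
    rw [Real.cos_add_pi, Real.sin_add_pi,
      show (-Real.cos θ) = (-1) * Real.cos θ by ring, mul_pow,
      show (-Real.sin θ) = (-1) * Real.sin θ by ring, mul_pow]
    have he : (-1:ℝ)^k * ((-1:ℝ)^(Q.natDegree - 2 - k)) = (-1)^Q.natDegree := by
      have h3 : Q.natDegree = (k + (Q.natDegree - 2 - k)) + 2 := by omega
      rw [h3, pow_add, pow_add]
      norm_num
    linear_combination (P.coeff k * Real.cos θ ^ k * Real.sin θ ^ (Q.natDegree - 2 - k)) * he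
  have hQt : Qt Q (θ + Real.pi) = (-1)^Q.natDegree * Qt Q θ := by
    rw [Qt, Qt, Finset.mul_sum]
    refine Finset.sum_congr rfl fun k hk => ?_
    rw [Finset.mem_range, Nat.lt_succ_iff] at hk
    rw [Real.cos_add_pi, Real.sin_add_pi,
      show (-Real.cos θ) = (-1) * Real.cos θ by ring, mul_pow,
      show (-Real.sin θ) = (-1) * Real.sin θ by ring, mul_pow]
    have he : (-1:ℝ)^k * ((-1:ℝ)^(Q.natDegree - k)) = (-1)^Q.natDegree := by
      rw [← pow_add]
      congr 1
      omega
    linear_combination (Q.coeff k * Real.cos θ ^ k * Real.sin θ ^ (Q.natDegree - k)) * he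
  rw [Ff, Ff, hPt, hQt, mul_div_mul_left]
  positivity
lemma cot_inj : Set.InjOn (fun θ => Real.cos θ / Real.sin θ) (Set.Ioo 0 Real.pi) := by
  intro x hx y hy hxy
  have hsx : 0 < Real.sin x := Real.sin_pos_of_pos_of_lt_pi hx.1 hx.2
  have hsy : 0 < Real.sin y := Real.sin_pos_of_pos_of_lt_pi hy.1 hy.2
  simp only at hxy
  rw [div_eq_div_iff hsx.ne' hsy.ne'] at hxy
  have hsin : Real.sin (x - y) = 0 := by
    rw [Real.sin_sub]; linarith
  rw [Real.sin_eq_zero_iff] at hsin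
  obtain ⟨n, hn⟩ := hsin
  have hpi := Real.pi_pos
  have hb1 : x - y < Real.pi := by linarith [hx.2, hy.1]
  have hb2 : -Real.pi < x - y := by linarith [hx.1, hy.2]
  have hn0 : n = 0 := by
    by_contra h
    rcases lt_or_gt_of_ne h with h' | h'
    · have : (n:ℝ) ≤ -1 := by exact_mod_cast (show n ≤ -1 by omega)
      nlinarith
    · have : (1:ℝ) ≤ (n:ℝ) := by exact_mod_cast h'
      nlinarith
  rw [hn0] at hn
  simp at hn
  linarith

lemma cot_image : (fun θ => Real.cos θ / Real.sin θ) '' (Set.Ioo 0 Real.pi) = Set.univ := by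
  ext x
  simp only [Set.mem_univ, iff_true, Set.mem_image]
  obtain ⟨h0, h1, h2, _⟩ := coord x
  exact ⟨Real.pi/2 - Real.arctan x, ⟨h0, h1⟩, h2⟩

lemma cot_deriv {θ : ℝ} (h : θ ∈ Set.Ioo 0 Real.pi) :
    HasDerivWithinAt (fun θ => Real.cos θ / Real.sin θ) (-(1/Real.sin θ^2))
      (Set.Ioo 0 Real.pi) θ := by
  have hs : 0 < Real.sin θ := Real.sin_pos_of_pos_of_lt_pi h.1 h.2
  have hd := (Real.hasDerivAt_cos θ).div (Real.hasDerivAt_sin θ) hs.ne'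
  have : (-Real.sin θ * Real.sin θ - Real.cos θ * Real.cos θ) / Real.sin θ ^ 2
      = -(1/Real.sin θ^2) := by
    have h1 := Real.sin_sq_add_cos_sq θ
    field_simp
    nlinarith [h1]
  rw [this] at hd
  exact hd.hasDerivWithinAt

lemma integral_eq {P Q : Polynomial ℝ} (hQ : ∀ x : ℝ, Q.eval x ≠ 0)
    (hdeg : P.degree + 2 ≤ Q.degree) (hP : P ≠ 0) :
    ∫ z : ℝ, P.eval z / Q.eval z = ∫ θ in (0:ℝ)..Real.pi, Ff P Q θ := by
  have h1 : (∫ z : ℝ, P.eval z / Q.eval z)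
      = ∫ z in (fun θ => Real.cos θ / Real.sin θ) '' (Set.Ioo 0 Real.pi),
          P.eval z / Q.eval z := by
    rw [cot_image, setIntegral_univ]
  rw [h1, integral_image_eq_integral_abs_deriv_smul measurableSet_Ioo
    (fun θ hθ => cot_deriv hθ) cot_inj]
  rw [intervalIntegral.integral_of_le Real.pi_pos.le, integral_Ioc_eq_integral_Ioo]
  refine setIntegral_congr_fun measurableSet_Ioo (fun θ hθ => ?_)
  have hs : 0 < Real.sin θ := Real.sin_pos_of_pos_of_lt_pi hθ.1 hθ.2
  rw [base_id hQ hdeg hP hs.ne']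
  rw [abs_neg, abs_of_pos (by positivity : (0:ℝ) < 1/Real.sin θ^2)]
  rw [smul_eq_mul]
  field_simp

end Aux

section Main
open Polynomial Finset Real MeasureTheory

/-- Starting from a real rational function `R₀ = P/Q` with no real poles and
`deg P ≤ deg Q - 2`, the iterated direct images `R_{n+1} = π_* R_n` under
`π(z) = (z²-1)/(2z)` are all rational with no real poles, and converge uniformly on
compact subsets of `ℝ` to `(1/π)(∫_{-∞}^∞ R₀)·1/(1+x²)`. -/
theorem iterated_pushforward_convergence (P Q : Polynomial ℝ)
    (hQ : ∀ x : ℝ, Q.eval x ≠ 0) (hdeg : P.degree + 2 ≤ Q.degree)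
    (R : ℕ → ℝ → ℝ)
    (hR0 : ∀ x, R 0 x = P.eval x / Q.eval x)
    (hrec : ∀ n, R (n + 1) = pushforward (R n)) :
    (∀ n, ∃ Pn Qn : Polynomial ℝ, (∀ x : ℝ, Qn.eval x ≠ 0) ∧
      ∀ x : ℝ, R n x = Pn.eval x / Qn.eval x) ∧
    (∀ K : Set ℝ, IsCompact K →
      TendstoUniformlyOn (fun n x => R n x)
        (fun x => (1 / Real.pi) * (∫ z : ℝ, R 0 z) * (1 / (1 + x ^ 2))) atTop K) := by
  constructor
  · -- rationality
    intro n
    induction n with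
    | zero => exact ⟨P, Q, hQ, hR0⟩
    | succ n ih =>
        obtain ⟨Pn, Qn, hQn, hRn⟩ := ih
        refine ⟨nextP Pn Qn, nextQ Qn, nextQ_ne Qn hQn, fun w => ?_⟩
        rw [hrec n]
        have : pushforward (R n) w = pushforward (fun x => Pn.eval x / Qn.eval x) w := by
          simp only [pushforward, hRn]
        rw [this, pushforward_rat Pn Qn hQn]
  · -- convergence
    intro K _
    by_cases hP : P = 0
    · -- trivial case
      have hR : ∀ n x, R n x = 0 := by
        intro n
        induction n with
        | zero => intro x; rw [hR0, hP]; simp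
        | succ n ih => intro x; rw [hrec n]; simp only [pushforward, ih]; ring
      have hI : (∫ z : ℝ, R 0 z) = 0 := by
        have : R 0 = fun _ => (0:ℝ) := funext (hR 0)
        rw [this, integral_zero]
      rw [Metric.tendstoUniformlyOn_iff]
      intro ε hε
      filter_upwards with n x _
      rw [hI, hR n x]
      simpa using hε
    · -- main case
      have h2 := hd2 hdeg hP
      have hper := Ff_periodic (P := P) h2
      have hcont := Ff_cont (P := P) hQ
      have hI : (∫ z : ℝ, R 0 z) = ∫ θ in (0:ℝ)..Real.pi, Ff P Q θ := by
        have : R 0 = fun x => P.eval x / Q.eval x := funext hR0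
        rw [this]
        exact integral_eq hQ hdeg hP
      set c := ∫ θ in (0:ℝ)..Real.pi, Ff P Q θ with hc
      rw [Metric.tendstoUniformlyOn_iff]
      intro ε hε
      obtain ⟨N, hN⟩ := riemann hcont hper (half_pos hε)
      rw [eventually_atTop]
      refine ⟨N, fun n hn x _ => ?_⟩
      obtain ⟨h0, h1, h2', h3⟩ := coord x
      set θ := Real.pi/2 - Real.arctan x with hθ
      have hclaim := claim hQ hdeg hP R hR0 hrec n θ h0 h1
      rw [h2'] at hclaim
      have hRn : R n x = (∑ k ∈ Finset.range (2^n), Ff P Q ((θ + k * Real.pi)/2^n)) / 2^n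
          * (1 / (1 + x^2)) := by rw [hclaim, h3]
      set S := (∑ k ∈ Finset.range (2^n), Ff P Q ((θ + k * Real.pi)/2^n)) / 2^n with hS
      have hriem := hN n hn θ ⟨h0.le, h1.le⟩
      rw [Real.dist_eq, hI, hRn]
      have hfact : 1 / Real.pi * c * (1 / (1 + x^2)) - S * (1 / (1 + x^2))
          = (c / Real.pi - S) * (1 / (1 + x^2)) := by ring
      rw [hfact, abs_mul]
      have ht : |1 / (1 + x^2)| ≤ 1 := by
        rw [abs_of_pos (by positivity : (0:ℝ) < 1/(1+x^2))]
        rw [div_le_one (by positivity)]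
        nlinarith [sq_nonneg x]
      have hcs : |c / Real.pi - S| ≤ ε/2 := by
        rw [abs_sub_comm]
        exact hriem
      calc |c / Real.pi - S| * |1 / (1 + x^2)| ≤ (ε/2) * 1 := by
            apply mul_le_mul hcs ht (abs_nonneg _) (by linarith)
      _ < ε := by linarith

end Main
end

section
/- Let a₀, a₁, b₀ > 0. Then for all real w, b₀/(a₀σ₊(w)² + a₁)·σ₊'(w) + b₀/(a₀σ₋(w)² + a₁)·σ₋'(w) = 2b₀(a₀+a₁)/(4a₀a₁w² + (a₀+a₁)²), where σ±(w) = w ± √(w²+1). Consequently ∫₀^∞ b₀/(a₀z² + a₁) dz = ∫₀^∞ 2b₀(a₀+a₁)/(4a₀a₁w² + (a₀+a₁)²) dw, and both integrals equal (b₀/√(a₀a₁))·(π/2). -/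
open MeasureTheory

theorem integral_Ioi_div_mul_sq_add (a c b : ℝ) (ha : 0 < a) (hc : 0 < c) :
    ∫ z in Set.Ioi (0:ℝ), b / (a * z ^ 2 + c) = b / Real.sqrt (a * c) * (Real.pi / 2) := by
  have hsa : 0 < Real.sqrt a := Real.sqrt_pos.mpr ha
  have hsc : 0 < Real.sqrt c := Real.sqrt_pos.mpr hc
  have hc2 : Real.sqrt c ^ 2 = c := Real.sq_sqrt hc.le
  have hrescale : ∀ z : ℝ,
      b / (a * z ^ 2 + c) = b / c * (1 + (Real.sqrt a / Real.sqrt c * z) ^ 2)⁻¹ := by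
    intro z
    rw [mul_pow, div_pow, Real.sq_sqrt ha.le, hc2]
    field_simp
    ring
  simp_rw [hrescale]
  rw [integral_const_mul, integral_comp_mul_left_Ioi (fun x => (1 + x ^ 2)⁻¹) 0 (by positivity),
    mul_zero, integral_Ioi_inv_one_add_sq, Real.arctan_zero, sub_zero, smul_eq_mul,
    Real.sqrt_mul ha.le]
  field_simp
  rw [hc2]

theorem pushforward_eq_div_sqrt (S : ℝ → ℝ) (w : ℝ) :
    pushforward S w = ((w + Real.sqrt (w ^ 2 + 1)) * S (w + Real.sqrt (w ^ 2 + 1))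
      - (w - Real.sqrt (w ^ 2 + 1)) * S (w - Real.sqrt (w ^ 2 + 1))) / Real.sqrt (w ^ 2 + 1) := by
  have hs : 0 < Real.sqrt (w ^ 2 + 1) := Real.sqrt_pos.mpr (by positivity)
  unfold pushforward
  field_simp
  ring

theorem pushforward_div_mul_sq_add (a c b : ℝ) (ha : 0 ≤ a) (hc : 0 < c) (w : ℝ) :
    pushforward (fun z => b / (a * z ^ 2 + c)) w
      = 2 * b * (a + c) / (4 * a * c * w ^ 2 + (a + c) ^ 2) := by
  rw [pushforward_eq_div_sqrt]
  set s := Real.sqrt (w ^ 2 + 1)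
  have hs : 0 < s := Real.sqrt_pos.mpr (by positivity)
  have hs2 : s ^ 2 = w ^ 2 + 1 := Real.sq_sqrt (by positivity)
  have hprod : (w + s) * (w - s) = -1 := by linear_combination -hs2
  have hdp : 0 < a * (w + s) ^ 2 + c := by positivity
  have hdm : 0 < a * (w - s) ^ 2 + c := by positivity
  have hden : (a * (w + s) ^ 2 + c) * (a * (w - s) ^ 2 + c)
      = 4 * a * c * w ^ 2 + (a + c) ^ 2 := by
    linear_combination (a ^ 2 * ((w + s) * (w - s) - 1) - 2 * a * c) * hprod
  rw [← hden]
  field_simp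
  linear_combination (-2 * a * b * s) * hprod

theorem pushforward_degree_two_general (a₀ a₁ b₀ : ℝ)
    (ha₀ : 0 < a₀) (ha₁ : 0 < a₁) :
    (∀ w : ℝ, pushforward (fun z => b₀ / (a₀ * z ^ 2 + a₁)) w
        = 2 * b₀ * (a₀ + a₁) / (4 * a₀ * a₁ * w ^ 2 + (a₀ + a₁) ^ 2)) ∧
    (∫ z in Set.Ioi (0:ℝ), b₀ / (a₀ * z ^ 2 + a₁))
      = (∫ w in Set.Ioi (0:ℝ),
          2 * b₀ * (a₀ + a₁) / (4 * a₀ * a₁ * w ^ 2 + (a₀ + a₁) ^ 2)) ∧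
    (∫ z in Set.Ioi (0:ℝ), b₀ / (a₀ * z ^ 2 + a₁))
      = b₀ / Real.sqrt (a₀ * a₁) * (Real.pi / 2) := by
  have hsum : 0 < a₀ + a₁ := by positivity
  have hG : 0 < Real.sqrt (a₀ * a₁) := Real.sqrt_pos.mpr (by positivity)
  have hsqrt :
      Real.sqrt (4 * a₀ * a₁ * (a₀ + a₁) ^ 2) = 2 * (a₀ + a₁) * Real.sqrt (a₀ * a₁) := by
    rw [show 4 * a₀ * a₁ * (a₀ + a₁) ^ 2 = (2 * (a₀ + a₁)) ^ 2 * (a₀ * a₁) by ring,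
      Real.sqrt_mul (by positivity), Real.sqrt_sq (by positivity)]
  have hsource := integral_Ioi_div_mul_sq_add a₀ a₁ b₀ ha₀ ha₁
  have htarget := integral_Ioi_div_mul_sq_add (4 * a₀ * a₁) ((a₀ + a₁) ^ 2) (2 * b₀ * (a₀ + a₁))
    (by positivity) (by positivity)
  have hvalue : 2 * b₀ * (a₀ + a₁) / (2 * (a₀ + a₁) * Real.sqrt (a₀ * a₁))
      = b₀ / Real.sqrt (a₀ * a₁) := by
    field_simp
  rw [hsqrt, hvalue] at htarget
  exact ⟨pushforward_div_mul_sq_add a₀ a₁ b₀ ha₀.le ha₁, hsource.trans htarget.symm, hsource⟩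

/-- Degree-2 example: the direct image of `b₀/(a₀z²+a₁) dz` under `π(z) = (z²-1)/(2z)`
is `2b₀(a₀+a₁)/(4a₀a₁w²+(a₀+a₁)²) dw`; consequently the two integrals over `(0,∞)`
agree and both equal `(b₀/√(a₀a₁))·(π/2)`. -/
theorem pushforward_degree_two (a₀ a₁ b₀ : ℝ)
    (ha₀ : 0 < a₀) (ha₁ : 0 < a₁) (hb₀ : 0 < b₀) :
    (∀ w : ℝ, pushforward (fun z => b₀ / (a₀ * z ^ 2 + a₁)) w
        = 2 * b₀ * (a₀ + a₁) / (4 * a₀ * a₁ * w ^ 2 + (a₀ + a₁) ^ 2)) ∧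
    (∫ z in Set.Ioi (0:ℝ), b₀ / (a₀ * z ^ 2 + a₁))
      = (∫ w in Set.Ioi (0:ℝ),
          2 * b₀ * (a₀ + a₁) / (4 * a₀ * a₁ * w ^ 2 + (a₀ + a₁) ^ 2)) ∧
    (∫ z in Set.Ioi (0:ℝ), b₀ / (a₀ * z ^ 2 + a₁))
      = b₀ / Real.sqrt (a₀ * a₁) * (Real.pi / 2) :=
  pushforward_degree_two_general a₀ a₁ b₀ ha₀ ha₁
end

section
/- Let a₀, a₁, a₂, b₀, b₁ be real with a₀ > 0, a₂ > 0 and a₀x⁴ + a₁x² + a₂ > 0 for all real x. Then ∫₀^∞ (b₀z² + b₁)/(a₀z⁴ + a₁z² + a₂) dz = ∫₀^∞ (b₀⁽¹⁾w² + b₁⁽¹⁾)/(a₀⁽¹⁾w⁴ + a₁⁽¹⁾w² + a₂⁽¹⁾) dw, where b₀⁽¹⁾ = 8(a₂b₀ + a₀b₁), b₁⁽¹⁾ = 2(a₀+a₁+a₂)(b₀+b₁), a₀⁽¹⁾ = 16a₀a₂, a₁⁽¹⁾ = 4(a₀a₁ + 4a₀a₂ + a₁a₂), a₂⁽¹⁾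 = (a₀+a₁+a₂)². -/
/-!
Write `R = N / P` for the left integrand and `R₁ = N₁ / Q` for the right one. Splitting `(0, ∞)`
at `1` and folding `(0, 1)` onto `(1, ∞)` by `z ↦ 1 / z` gives
`∫₀^∞ R = ∫₁^∞ (R z + z⁻² R (1 / z)) dz`. The Landen map `φ z = (z² - 1) / (2z)` is an increasing
bijection from `(1, ∞)` onto `(0, ∞)`, and `z⁴ Q (φ z) = P z · z⁴ P (1 / z)`; clearing denominators
with this factorization gives `φ' z · R₁ (φ z) = R z + z⁻² R (1 / z)`, so substituting `w = φ z`
turns the folded integral into `∫₀^∞ R₁`. The split needs `R` integrable, which follows from a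
bound `P z ≥ ε (z⁴ + 1)`.
-/

open MeasureTheory Set

theorem exists_pos_mul_sq_add_one_le_of_pos_on_nonneg {a b c : ℝ} (ha : 0 < a)
    (h : ∀ t, 0 ≤ t → 0 < a * t ^ 2 + b * t + c) :
    ∃ ε > 0, ∀ t, 0 ≤ t → ε * (t ^ 2 + 1) ≤ a * t ^ 2 + b * t + c := by
  have hc : 0 < c := by simpa using h 0 le_rfl
  rcases le_or_gt 0 b with hb | hb
  · refine ⟨min a c, lt_min ha hc, fun t ht => ?_⟩
    nlinarith [min_le_left a c, min_le_right a c, mul_nonneg hb ht, sq_nonneg t]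
  · -- for `b < 0` the quadratic is positive on all of `ℝ`, so its discriminant is negative
    have hdisc : b ^ 2 < 4 * a * c := by
      have := discrim_lt_zero (b := b) (c := c) ha.ne' fun t => by
        rcases le_or_gt 0 t with ht | ht
        · nlinarith [h t ht]
        · nlinarith [mul_pos_of_neg_of_neg hb ht, sq_nonneg t]
      rw [discrim] at this
      linarith
    -- this `ε` makes `b² ≤ 4 (a - ε) (c - ε)`, with `ε < a`
    refine ⟨(4 * a * c - b ^ 2) / (4 * (a + c)), by apply div_pos <;> linarith,
      fun t _ => ?_⟩
    set ε := (4 * a * c - b ^ 2) / (4 * (a + c)) with hε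
    have hεac : ε * (4 * (a + c)) = 4 * a * c - b ^ 2 := by
      rw [hε, div_mul_cancel₀]; linarith
    have hεa : ε < a := by nlinarith [sq_nonneg b]
    nlinarith [sq_nonneg (2 * (a - ε) * t + b), sq_nonneg ε]

theorem exists_pos_mul_pow_four_add_one_le {a₀ a₁ a₂ : ℝ} (ha₀ : 0 < a₀)
    (hpos : ∀ x : ℝ, 0 < a₀ * x ^ 4 + a₁ * x ^ 2 + a₂) :
    ∃ ε > 0, ∀ x : ℝ, ε * (x ^ 4 + 1) ≤ a₀ * x ^ 4 + a₁ * x ^ 2 + a₂ := by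
  have hsq (x : ℝ) : x ^ 4 = (x ^ 2) ^ 2 := by ring
  obtain ⟨ε, hε, hle⟩ := exists_pos_mul_sq_add_one_le_of_pos_on_nonneg ha₀ fun t ht => by
    simpa [hsq, Real.sq_sqrt ht] using hpos (Real.sqrt t)
  exact ⟨ε, hε, fun x => by simpa [hsq] using hle (x ^ 2) (sq_nonneg x)⟩

noncomputable def quarticRatio (a₀ a₁ a₂ b₀ b₁ z : ℝ) : ℝ :=
  (b₀ * z ^ 2 + b₁) / (a₀ * z ^ 4 + a₁ * z ^ 2 + a₂)

theorem integrable_quarticRatio {a₀ a₁ a₂ : ℝ} (b₀ b₁ : ℝ) (ha₀ : 0 < a₀)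
    (hpos : ∀ x : ℝ, 0 < a₀ * x ^ 4 + a₁ * x ^ 2 + a₂) :
    Integrable (quarticRatio a₀ a₁ a₂ b₀ b₁) := by
  obtain ⟨ε, hε, hle⟩ := exists_pos_mul_pow_four_add_one_le ha₀ hpos
  have hcont : Continuous (quarticRatio a₀ a₁ a₂ b₀ b₁) :=
    (by fun_prop : Continuous _).div (by fun_prop) fun x => (hpos x).ne'
  refine (integrable_inv_one_add_sq.const_mul (2 * (|b₀| + |b₁|) / ε)).mono'
    hcont.aestronglyMeasurable (ae_of_all _ fun z => ?_)
  have hnum : |b₀ * z ^ 2 + b₁| ≤ (|b₀| + |b₁|) * (1 + z ^ 2) :=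
    calc |b₀ * z ^ 2 + b₁| ≤ |b₀| * z ^ 2 + |b₁| :=
          (abs_add_le _ _).trans_eq (by rw [abs_mul, abs_of_nonneg (sq_nonneg z)])
      _ ≤ (|b₀| + |b₁|) * (1 + z ^ 2) := by
          nlinarith [abs_nonneg b₀, abs_nonneg b₁, sq_nonneg z]
  have hden : ε * (1 + z ^ 2) ^ 2 / 2 ≤ a₀ * z ^ 4 + a₁ * z ^ 2 + a₂ := by
    nlinarith [hle z, mul_nonneg hε.le (sq_nonneg (z ^ 2 - 1))]
  calc ‖quarticRatio a₀ a₁ a₂ b₀ b₁ z‖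
      = |b₀ * z ^ 2 + b₁| / (a₀ * z ^ 4 + a₁ * z ^ 2 + a₂) := by
        rw [quarticRatio, norm_div, Real.norm_eq_abs, Real.norm_of_nonneg (hpos z).le]
    _ ≤ (|b₀| + |b₁|) * (1 + z ^ 2) / (ε * (1 + z ^ 2) ^ 2 / 2) := by gcongr
    _ = 2 * (|b₀| + |b₁|) / ε * (1 + z ^ 2)⁻¹ := by field_simp

section ChangeOfVariables

variable {E : Type*} [NormedAddCommGroup E] [NormedSpace ℝ E]

theorem image_inv_Ioi_one : (·⁻¹) '' Ioi (1 : ℝ) = Ioo 0 1 := by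
  rw [image_inv_eq_inv, inv_Ioi₀ one_pos, inv_one]

theorem hasDerivWithinAt_inv_Ioi_one {z : ℝ} (hz : z ∈ Ioi 1) :
    HasDerivWithinAt (·⁻¹) (-(z ^ 2)⁻¹) (Ioi 1) z :=
  (hasDerivAt_inv (zero_lt_one.trans hz).ne').hasDerivWithinAt

theorem integral_Ioo_zero_one_eq_integral_Ioi_one_comp_inv (f : ℝ → E) :
    ∫ z in Ioo 0 1, f z = ∫ z in Ioi 1, (z ^ 2)⁻¹ • f z⁻¹ := by
  rw [← image_inv_Ioi_one, integral_image_eq_integral_abs_deriv_smul measurableSet_Ioi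
    (fun _ => hasDerivWithinAt_inv_Ioi_one) inv_injective.injOn]
  simp only [abs_neg, abs_inv, abs_sq]

theorem integrableOn_Ioi_one_comp_inv_iff {f : ℝ → E} :
    IntegrableOn (fun z => (z ^ 2)⁻¹ • f z⁻¹) (Ioi 1) ↔ IntegrableOn f (Ioo 0 1) := by
  rw [← image_inv_Ioi_one, integrableOn_image_iff_integrableOn_abs_deriv_smul measurableSet_Ioi
    (fun _ => hasDerivWithinAt_inv_Ioi_one) inv_injective.injOn]
  simp only [abs_neg, abs_inv, abs_sq]

theorem integral_Ioi_zero_eq_integral_Ioi_one_add_comp_inv {f : ℝ → E}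
    (hf : IntegrableOn f (Ioi 0)) :
    ∫ z in Ioi 0, f z = ∫ z in Ioi 1, (f z + (z ^ 2)⁻¹ • f z⁻¹) := by
  have h01 : IntegrableOn f (Ioo 0 1) := hf.mono_set Ioo_subset_Ioi_self
  rw [← Ioo_union_Ici_eq_Ioi zero_lt_one, setIntegral_union
      ((Iio_disjoint_Ici le_rfl).mono_left Ioo_subset_Iio_self) measurableSet_Ici h01
      (hf.mono_set (Ici_subset_Ioi.mpr zero_lt_one)),
    integral_Ici_eq_integral_Ioi, integral_add (hf.mono_set (Ioi_subset_Ioi zero_le_one))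
      (integrableOn_Ioi_one_comp_inv_iff.mpr h01),
    integral_Ioo_zero_one_eq_integral_Ioi_one_comp_inv, add_comm]

noncomputable def landenMap (z : ℝ) : ℝ := (z ^ 2 - 1) / (2 * z)

theorem hasDerivAt_landenMap {z : ℝ} (hz : z ≠ 0) :
    HasDerivAt landenMap ((z ^ 2 + 1) / (2 * z ^ 2)) z := by
  refine (((hasDerivAt_pow 2 z).sub_const 1).div ((hasDerivAt_id z).const_mul 2)
    (mul_ne_zero two_ne_zero hz)).congr_deriv ?_
  simp only [id]
  field_simp
  ring

theorem injOn_landenMap : InjOn landenMap (Ioi 0) := by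
  intro x (hx : 0 < x) y (hy : 0 < y) h
  rw [landenMap, landenMap, div_eq_div_iff (by positivity) (by positivity)] at h
  have : (x - y) * (x * y + 1) = 0 := by linear_combination h / 2
  rcases mul_eq_zero.mp this with h | h
  · linarith
  · nlinarith [mul_pos hx hy]

theorem landenMap_image_Ioi_one : landenMap '' Ioi 1 = Ioi 0 := by
  ext w
  constructor
  · rintro ⟨z, hz : 1 < z, rfl⟩
    exact div_pos (show 0 < z ^ 2 - 1 by nlinarith) (show 0 < 2 * z by linarith)
  · intro (hw : 0 < w)
    -- `z = w + √(w² + 1)` is the root `> 1` of `z² - 2wz - 1 = 0`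
    have hs : Real.sqrt (w ^ 2 + 1) ^ 2 = w ^ 2 + 1 := Real.sq_sqrt (by positivity)
    have hs1 : 1 ≤ Real.sqrt (w ^ 2 + 1) := Real.one_le_sqrt.mpr (by nlinarith)
    refine ⟨w + Real.sqrt (w ^ 2 + 1), mem_Ioi.mpr (by linarith), ?_⟩
    rw [landenMap, div_eq_iff (by positivity)]
    linear_combination hs

theorem integral_Ioi_zero_eq_integral_Ioi_one_comp_landenMap (g : ℝ → E) :
    ∫ w in Ioi 0, g w = ∫ z in Ioi 1, ((z ^ 2 + 1) / (2 * z ^ 2)) • g (landenMap z) := by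
  have hderiv (z) (hz : z ∈ Ioi (1 : ℝ)) :
      HasDerivWithinAt landenMap ((z ^ 2 + 1) / (2 * z ^ 2)) (Ioi 1) z :=
    (hasDerivAt_landenMap (zero_lt_one.trans hz).ne').hasDerivWithinAt
  rw [← landenMap_image_Ioi_one, integral_image_eq_integral_abs_deriv_smul measurableSet_Ioi
    hderiv (injOn_landenMap.mono (Ioi_subset_Ioi zero_le_one))]
  refine setIntegral_congr_fun measurableSet_Ioi fun z (hz : 1 < z) => ?_
  have : 0 < z := zero_lt_one.trans hz
  rw [abs_of_pos (by positivity)]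

end ChangeOfVariables

theorem landen_denominator_factorization (a₀ a₁ a₂ : ℝ) {z : ℝ} (hz : z ≠ 0) :
    (16 * a₀ * a₂ * landenMap z ^ 4 + 4 * (a₀ * a₁ + 4 * a₀ * a₂ + a₁ * a₂) * landenMap z ^ 2
      + (a₀ + a₁ + a₂) ^ 2) * z ^ 4
      = (a₀ * z ^ 4 + a₁ * z ^ 2 + a₂) * (a₂ * z ^ 4 + a₁ * z ^ 2 + a₀) := by
  rw [landenMap]
  field_simp
  ring

theorem mul_quarticRatio_landenMap (a₀ a₁ a₂ b₀ b₁ : ℝ) {z : ℝ} (hz : z ≠ 0)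
    (hP : a₀ * z ^ 4 + a₁ * z ^ 2 + a₂ ≠ 0) (hPinv : a₀ * z⁻¹ ^ 4 + a₁ * z⁻¹ ^ 2 + a₂ ≠ 0) :
    (z ^ 2 + 1) / (2 * z ^ 2) * quarticRatio (16 * a₀ * a₂) (4 * (a₀ * a₁ + 4 * a₀ * a₂ + a₁ * a₂))
        ((a₀ + a₁ + a₂) ^ 2) (8 * (a₂ * b₀ + a₀ * b₁)) (2 * (a₀ + a₁ + a₂) * (b₀ + b₁))
        (landenMap z)
      = quarticRatio a₀ a₁ a₂ b₀ b₁ z + (z ^ 2)⁻¹ * quarticRatio a₀ a₁ a₂ b₀ b₁ z⁻¹ := by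
  have hQ := eq_div_of_mul_eq (pow_ne_zero 4 hz) (landen_denominator_factorization a₀ a₁ a₂ hz)
  have hrev : a₀ * z⁻¹ ^ 4 + a₁ * z⁻¹ ^ 2 + a₂ = (a₂ * z ^ 4 + a₁ * z ^ 2 + a₀) / z ^ 4 := by
    field_simp; ring
  have hP' : a₂ * z ^ 4 + a₁ * z ^ 2 + a₀ ≠ 0 := (div_ne_zero_iff.mp (hrev ▸ hPinv)).1
  rw [quarticRatio, quarticRatio, quarticRatio, hQ, hrev, landenMap]
  -- with both quartics as atoms, `field_simp` can clear them
  generalize hp : a₀ * z ^ 4 + a₁ * z ^ 2 + a₂ = p at *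
  generalize hp' : a₂ * z ^ 4 + a₁ * z ^ 2 + a₀ = p' at *
  field_simp
  rw [← hp, ← hp']
  ring

theorem landen_degree_four_general (a₀ a₁ a₂ b₀ b₁ : ℝ)
    (ha₀ : 0 < a₀)
    (hpos : ∀ x : ℝ, 0 < a₀ * x ^ 4 + a₁ * x ^ 2 + a₂) :
    ∫ z in Set.Ioi (0:ℝ), (b₀ * z ^ 2 + b₁) / (a₀ * z ^ 4 + a₁ * z ^ 2 + a₂)
      = ∫ w in Set.Ioi (0:ℝ),
          (8 * (a₂ * b₀ + a₀ * b₁) * w ^ 2 + 2 * (a₀ + a₁ + a₂) * (b₀ + b₁)) /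
          (16 * a₀ * a₂ * w ^ 4 + 4 * (a₀ * a₁ + 4 * a₀ * a₂ + a₁ * a₂) * w ^ 2
            + (a₀ + a₁ + a₂) ^ 2) := by
  change ∫ z in Ioi 0, quarticRatio a₀ a₁ a₂ b₀ b₁ z = ∫ w in Ioi 0, quarticRatio _ _ _ _ _ w
  rw [integral_Ioi_zero_eq_integral_Ioi_one_add_comp_inv
      (integrable_quarticRatio b₀ b₁ ha₀ hpos).integrableOn,
    integral_Ioi_zero_eq_integral_Ioi_one_comp_landenMap]
  refine setIntegral_congr_fun measurableSet_Ioi fun z (hz : 1 < z) => ?_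
  exact (mul_quarticRatio_landenMap a₀ a₁ a₂ b₀ b₁ (zero_lt_one.trans hz).ne'
    (hpos z).ne' (hpos z⁻¹).ne').symm

/-- The degree-4 rational Landen transformation preserves the integral over `(0,∞)`. -/
theorem landen_degree_four (a₀ a₁ a₂ b₀ b₁ : ℝ)
    (ha₀ : 0 < a₀) (ha₂ : 0 < a₂)
    (hpos : ∀ x : ℝ, 0 < a₀ * x ^ 4 + a₁ * x ^ 2 + a₂) :
    ∫ z in Set.Ioi (0:ℝ), (b₀ * z ^ 2 + b₁) / (a₀ * z ^ 4 + a₁ * z ^ 2 + a₂)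
      = ∫ w in Set.Ioi (0:ℝ),
          (8 * (a₂ * b₀ + a₀ * b₁) * w ^ 2 + 2 * (a₀ + a₁ + a₂) * (b₀ + b₁)) /
          (16 * a₀ * a₂ * w ^ 4 + 4 * (a₀ * a₁ + 4 * a₀ * a₂ + a₁ * a₂) * w ^ 2
            + (a₀ + a₁ + a₂) ^ 2) :=
  landen_degree_four_general a₀ a₁ a₂ b₀ b₁ ha₀ hpos
end

section
/- Let a₀, a₁, a₂, a₃, b₀, b₁, b₂ be real with a₀ > 0, a₃ > 0 and a₀x⁶ + a₁x⁴ + a₂x² + a₃ > 0 for all real x. Then ∫₀^∞ (b₀z⁴ + b₁z² + b₂)/(a₀z⁶ + a₁z⁴ + a₂z² + a₃) dz = ∫₀^∞ (b₀⁽¹⁾w⁴ + b₁⁽¹⁾w² + b₂⁽¹⁾)/(a₀⁽¹⁾w⁶ + a₁⁽¹⁾w⁴ + a₂⁽¹⁾w² + a₃⁽¹⁾) dw, where b₀⁽¹⁾ = 32(a₃b₀ + a₀b₂), b₁⁽¹⁾ = 8(a₂b₀ + 3a₃b₀ + a₀b₁ + a₃b₁ + 3a₀b₂ + a₁b₂),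 b₂⁽¹⁾ = 2(a₀+a₁+a₂+a₃)(b₀+b₁+b₂), a₀⁽¹⁾ = 64a₀a₃, a₁⁽¹⁾ = 16(a₀a₂ + 6a₀a₃ + a₁a₃), a₂⁽¹⁾ = 4(a₀a₁ + 4a₀a₂ + a₁a₂ + 9a₀a₃ + 4a₁a₃ + a₂a₃), a₃⁽¹⁾ = (a₀+a₁+a₂+a₃)². -/
/-!
Write `f = P/Q` for the left-hand integrand and `G = P₁/Q₁` for the right-hand one, and let
`π z = (z² - 1) / (2z)`, an increasing bijection of `(0, ∞)` onto `ℝ`. The coefficients of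
`P₁, Q₁` are exactly those for which `z⁶ Q₁(π z) = Q(z) · z⁶ Q(1/z)` (the second factor is `Q`
with its coefficients reversed) and
`π'(z) P₁(π z) / Q₁(π z) = f(z) + z⁻² f(1/z)`: the pullback of `G dw` along `π` is the sum of
`f dz` over the two branches `z` and `1/z`. Since `z ↦ 1/z` preserves `∫₀^∞ f`, substituting
`w = π z` gives `∫_ℝ G = 2 ∫₀^∞ f`, while `∫_ℝ G = 2 ∫₀^∞ G` because `G` is even.
Integrability of `f` at infinity also comes from the inversion: `z⁻² f(1/z)` is a rational
function whose denominator is `a₀` at `0`.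
-/

open MeasureTheory Set

section Inversion

variable {E : Type*} [NormedAddCommGroup E] [NormedSpace ℝ E]

theorem image_inv_Ioi_zero : (·⁻¹) '' Ioi (0 : ℝ) = Ioi 0 := by
  ext x
  simp [image_inv_eq_inv]

theorem image_inv_Ioo_zero_one : (·⁻¹) '' Ioo (0 : ℝ) 1 = Ioi 1 := by
  rw [image_inv_eq_inv, inv_Ioo_0_left one_pos, inv_one]

theorem integral_image_inv {s : Set ℝ} (hs : MeasurableSet s) (hs₀ : (0 : ℝ) ∉ s) (f : ℝ → E) :
    ∫ x in (·⁻¹) '' s, f x = ∫ x in s, (x ^ 2)⁻¹ • f x⁻¹ := by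
  rw [integral_image_eq_integral_abs_deriv_smul hs
    (fun x hx ↦ (hasDerivAt_inv (ne_of_mem_of_not_mem hx hs₀)).hasDerivWithinAt)
    inv_injective.injOn]
  simp

theorem integrableOn_image_inv_iff {s : Set ℝ} (hs : MeasurableSet s) (hs₀ : (0 : ℝ) ∉ s)
    (f : ℝ → E) :
    IntegrableOn f ((·⁻¹) '' s) ↔ IntegrableOn (fun x ↦ (x ^ 2)⁻¹ • f x⁻¹) s := by
  rw [integrableOn_image_iff_integrableOn_abs_deriv_smul hs
    (fun x hx ↦ (hasDerivAt_inv (ne_of_mem_of_not_mem hx hs₀)).hasDerivWithinAt)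
    inv_injective.injOn]
  simp

theorem integral_Ioi_comp_inv (f : ℝ → E) :
    ∫ x in Ioi 0, (x ^ 2)⁻¹ • f x⁻¹ = ∫ x in Ioi 0, f x := by
  rw [← integral_image_inv measurableSet_Ioi self_notMem_Ioi, image_inv_Ioi_zero]

theorem integrableOn_Ioi_comp_inv_iff (f : ℝ → E) :
    IntegrableOn (fun x ↦ (x ^ 2)⁻¹ • f x⁻¹) (Ioi 0) ↔ IntegrableOn f (Ioi 0) := by
  rw [← integrableOn_image_inv_iff measurableSet_Ioi self_notMem_Ioi, image_inv_Ioi_zero]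

theorem integrableOn_Ioi_of_continuousOn_comp_inv {f g : ℝ → E} (hf : ContinuousOn f (Icc 0 1))
    (hg : ContinuousOn g (Icc 0 1)) (hfg : ∀ x ∈ Ioo 0 1, (x ^ 2)⁻¹ • f x⁻¹ = g x) :
    IntegrableOn f (Ioi 0) := by
  have h_Ioc : IntegrableOn f (Ioc 0 1) := hf.integrableOn_Icc.mono_set Ioc_subset_Icc_self
  have h_Ioi : IntegrableOn f (Ioi 1) := by
    rw [← image_inv_Ioo_zero_one, integrableOn_image_inv_iff measurableSet_Ioo (by simp)]
    exact (hg.integrableOn_Icc.mono_set Ioo_subset_Icc_self).congr_fun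
      (fun x hx ↦ (hfg x hx).symm) measurableSet_Ioo
  simpa only [Ioc_union_Ioi_eq_Ioi zero_le_one] using h_Ioc.union h_Ioi

end Inversion

section LandenMap

variable {E : Type*} [NormedAddCommGroup E] [NormedSpace ℝ E]

theorem strictMonoOn_landenMap : StrictMonoOn landenMap (Ioi 0) := by
  intro x hx y hy hxy
  rw [mem_Ioi] at hx hy
  unfold landenMap
  rw [div_lt_div_iff₀ (by positivity) (by positivity)]
  nlinarith [mul_pos hx hy]

theorem landenMap_image_Ioi : landenMap '' Ioi 0 = univ := by
  refine eq_univ_of_forall fun w ↦ ?_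
  have hw : |w| < √(w ^ 2 + 1) := Real.lt_sqrt (abs_nonneg w) |>.mpr (by simp)
  have hz : 0 < w + √(w ^ 2 + 1) := by linarith [neg_abs_le w]
  refine ⟨w + √(w ^ 2 + 1), hz, ?_⟩
  unfold landenMap
  field_simp
  linear_combination Real.sq_sqrt (by positivity : 0 ≤ w ^ 2 + 1)

theorem integral_eq_integral_Ioi_landenMap (g : ℝ → E) :
    ∫ w, g w = ∫ z in Ioi 0, ((z ^ 2 + 1) / (2 * z ^ 2)) • g (landenMap z) := by
  rw [← setIntegral_univ, ← landenMap_image_Ioi, integral_image_eq_integral_abs_deriv_smul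
    measurableSet_Ioi (fun z hz ↦ (hasDerivAt_landenMap (ne_of_gt hz)).hasDerivWithinAt)
    strictMonoOn_landenMap.injOn]
  refine setIntegral_congr_fun measurableSet_Ioi fun z (hz : 0 < z) ↦ ?_
  rw [abs_of_pos (by positivity)]

end LandenMap

theorem integral_Ioi_eq_of_landenMap {f G : ℝ → ℝ} (hG : ∀ x, G (-x) = G x)
    (hf : IntegrableOn f (Ioi 0))
    (hfG : ∀ z ∈ Ioi 0, (z ^ 2 + 1) / (2 * z ^ 2) * G (landenMap z) = f z + (z ^ 2)⁻¹ * f z⁻¹) :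
    ∫ w in Ioi 0, G w = ∫ z in Ioi 0, f z := by
  have hf_inv : IntegrableOn (fun z ↦ (z ^ 2)⁻¹ * f z⁻¹) (Ioi 0) :=
    (integrableOn_Ioi_comp_inv_iff f).mpr hf
  have h_pullback : ∫ w, G w = 2 * ∫ z in Ioi 0, f z := by
    simp only [integral_eq_integral_Ioi_landenMap G, smul_eq_mul]
    rw [setIntegral_congr_fun measurableSet_Ioi hfG, integral_add hf hf_inv]
    simp only [← smul_eq_mul, integral_Ioi_comp_inv]
    ring
  have h_even : ∫ w, G w = 2 * ∫ w in Ioi 0, G w := by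
    rw [← integral_comp_abs]
    congr 1 with x
    rcases abs_choice x with h | h <;> simp [h, hG]
  linarith

section SexticRational

variable (a₀ a₁ a₂ a₃ b₀ b₁ b₂ : ℝ)

def evenQuartic (x : ℝ) : ℝ := b₀ * x ^ 4 + b₁ * x ^ 2 + b₂

def evenSextic (x : ℝ) : ℝ := a₀ * x ^ 6 + a₁ * x ^ 4 + a₂ * x ^ 2 + a₃

def landenQuartic : ℝ → ℝ :=
  evenQuartic (32 * (a₃ * b₀ + a₀ * b₂))
    (8 * (a₂ * b₀ + 3 * a₃ * b₀ + a₀ * b₁ + a₃ * b₁ + 3 * a₀ * b₂ + a₁ * b₂))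
    (2 * (a₀ + a₁ + a₂ + a₃) * (b₀ + b₁ + b₂))

def landenSextic : ℝ → ℝ :=
  evenSextic (64 * a₀ * a₃) (16 * (a₀ * a₂ + 6 * a₀ * a₃ + a₁ * a₃))
    (4 * (a₀ * a₁ + 4 * a₀ * a₂ + a₁ * a₂ + 9 * a₀ * a₃ + 4 * a₁ * a₃ + a₂ * a₃))
    ((a₀ + a₁ + a₂ + a₃) ^ 2)

variable {a₀ a₁ a₂ a₃ b₀ b₁ b₂}

theorem evenQuartic_neg (x : ℝ) : evenQuartic b₀ b₁ b₂ (-x) = evenQuartic b₀ b₁ b₂ x := by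
  unfold evenQuartic; ring

theorem evenSextic_neg (x : ℝ) : evenSextic a₀ a₁ a₂ a₃ (-x) = evenSextic a₀ a₁ a₂ a₃ x := by
  unfold evenSextic; ring

theorem evenQuartic_inv {x : ℝ} (hx : x ≠ 0) :
    evenQuartic b₀ b₁ b₂ x⁻¹ = evenQuartic b₂ b₁ b₀ x / x ^ 4 := by
  unfold evenQuartic; field_simp; ring

theorem evenSextic_inv {x : ℝ} (hx : x ≠ 0) :
    evenSextic a₀ a₁ a₂ a₃ x⁻¹ = evenSextic a₃ a₂ a₁ a₀ x / x ^ 6 := by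
  unfold evenSextic; field_simp; ring

theorem inv_sq_mul_div_evenSextic_inv {x : ℝ} (hx : x ≠ 0) :
    (x ^ 2)⁻¹ * (evenQuartic b₀ b₁ b₂ x⁻¹ / evenSextic a₀ a₁ a₂ a₃ x⁻¹)
      = evenQuartic b₂ b₁ b₀ x / evenSextic a₃ a₂ a₁ a₀ x := by
  rw [evenQuartic_inv hx, evenSextic_inv hx]
  field_simp

theorem evenSextic_reverse_pos (ha₀ : 0 < a₀) (hQ : ∀ x, 0 < evenSextic a₀ a₁ a₂ a₃ x) (x : ℝ) :
    0 < evenSextic a₃ a₂ a₁ a₀ x := by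
  rcases eq_or_ne x 0 with rfl | hx
  · simpa [evenSextic] using ha₀
  · have h := hQ x⁻¹
    rwa [evenSextic_inv hx, div_pos_iff_of_pos_right (by positivity)] at h

theorem continuous_div_evenSextic (hQ : ∀ x, evenSextic a₀ a₁ a₂ a₃ x ≠ 0) :
    Continuous fun x ↦ evenQuartic b₀ b₁ b₂ x / evenSextic a₀ a₁ a₂ a₃ x :=
  Continuous.div (by unfold evenQuartic; fun_prop) (by unfold evenSextic; fun_prop) hQ

theorem integrableOn_Ioi_div_evenSextic (ha₀ : 0 < a₀) (hQ : ∀ x, 0 < evenSextic a₀ a₁ a₂ a₃ x) :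
    IntegrableOn (fun x ↦ evenQuartic b₀ b₁ b₂ x / evenSextic a₀ a₁ a₂ a₃ x) (Ioi 0) :=
  integrableOn_Ioi_of_continuousOn_comp_inv
    (continuous_div_evenSextic fun x ↦ (hQ x).ne').continuousOn
    (continuous_div_evenSextic fun x ↦ (evenSextic_reverse_pos ha₀ hQ x).ne').continuousOn
    fun _ hx ↦ inv_sq_mul_div_evenSextic_inv hx.1.ne'

theorem landenSextic_landenMap_mul_pow {z : ℝ} (hz : z ≠ 0) :
    landenSextic a₀ a₁ a₂ a₃ (landenMap z) * z ^ 6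
      = evenSextic a₀ a₁ a₂ a₃ z * evenSextic a₃ a₂ a₁ a₀ z := by
  unfold landenSextic evenSextic landenMap
  field_simp
  ring

theorem landenQuartic_landenMap_mul_pow {z : ℝ} (hz : z ≠ 0) :
    (z ^ 2 + 1) / (2 * z ^ 2) * landenQuartic a₀ a₁ a₂ a₃ b₀ b₁ b₂ (landenMap z) * z ^ 6
      = evenQuartic b₀ b₁ b₂ z * evenSextic a₃ a₂ a₁ a₀ z
        + evenSextic a₀ a₁ a₂ a₃ z * evenQuartic b₂ b₁ b₀ z := by
  unfold landenQuartic evenQuartic evenSextic landenMap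
  field_simp
  ring

theorem landenMap_pullback {z : ℝ} (hz : z ≠ 0) (hQ : evenSextic a₀ a₁ a₂ a₃ z ≠ 0)
    (hQ' : evenSextic a₃ a₂ a₁ a₀ z ≠ 0) :
    (z ^ 2 + 1) / (2 * z ^ 2) *
        (landenQuartic a₀ a₁ a₂ a₃ b₀ b₁ b₂ (landenMap z) / landenSextic a₀ a₁ a₂ a₃ (landenMap z))
      = evenQuartic b₀ b₁ b₂ z / evenSextic a₀ a₁ a₂ a₃ z
        + evenQuartic b₂ b₁ b₀ z / evenSextic a₃ a₂ a₁ a₀ z := by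
  rw [div_add_div _ _ hQ hQ', ← landenSextic_landenMap_mul_pow hz,
    ← landenQuartic_landenMap_mul_pow hz, mul_div_assoc',
    mul_div_mul_right _ _ (pow_ne_zero 6 hz)]

end SexticRational

theorem landen_degree_six_general (a₀ a₁ a₂ a₃ b₀ b₁ b₂ : ℝ)
    (ha₀ : 0 < a₀)
    (hpos : ∀ x : ℝ, 0 < a₀ * x ^ 6 + a₁ * x ^ 4 + a₂ * x ^ 2 + a₃) :
    ∫ z in Set.Ioi (0:ℝ),
        (b₀ * z ^ 4 + b₁ * z ^ 2 + b₂) /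
          (a₀ * z ^ 6 + a₁ * z ^ 4 + a₂ * z ^ 2 + a₃)
      = ∫ w in Set.Ioi (0:ℝ),
          (32 * (a₃ * b₀ + a₀ * b₂) * w ^ 4
            + 8 * (a₂ * b₀ + 3 * a₃ * b₀ + a₀ * b₁ + a₃ * b₁ + 3 * a₀ * b₂ + a₁ * b₂)
              * w ^ 2
            + 2 * (a₀ + a₁ + a₂ + a₃) * (b₀ + b₁ + b₂)) /
          (64 * a₀ * a₃ * w ^ 6
            + 16 * (a₀ * a₂ + 6 * a₀ * a₃ + a₁ * a₃) * w ^ 4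
            + 4 * (a₀ * a₁ + 4 * a₀ * a₂ + a₁ * a₂ + 9 * a₀ * a₃ + 4 * a₁ * a₃
                + a₂ * a₃) * w ^ 2
            + (a₀ + a₁ + a₂ + a₃) ^ 2) := by
  have hQ' := evenSextic_reverse_pos ha₀ hpos
  refine (integral_Ioi_eq_of_landenMap
    (f := fun z ↦ evenQuartic b₀ b₁ b₂ z / evenSextic a₀ a₁ a₂ a₃ z)
    (G := fun w ↦ landenQuartic a₀ a₁ a₂ a₃ b₀ b₁ b₂ w / landenSextic a₀ a₁ a₂ a₃ w)
    ?_ (integrableOn_Ioi_div_evenSextic ha₀ hpos) ?_).symm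
  · intro x
    simp only [landenQuartic, landenSextic, evenQuartic_neg, evenSextic_neg]
  · intro z hz
    rw [inv_sq_mul_div_evenSextic_inv (ne_of_gt hz)]
    exact landenMap_pullback (ne_of_gt hz) (hpos z).ne' (hQ' z).ne'

/-- The degree-6 rational Landen transformation preserves the integral over `(0,∞)`. -/
theorem landen_degree_six (a₀ a₁ a₂ a₃ b₀ b₁ b₂ : ℝ)
    (ha₀ : 0 < a₀) (ha₃ : 0 < a₃)
    (hpos : ∀ x : ℝ, 0 < a₀ * x ^ 6 + a₁ * x ^ 4 + a₂ * x ^ 2 + a₃) :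
    ∫ z in Set.Ioi (0:ℝ),
        (b₀ * z ^ 4 + b₁ * z ^ 2 + b₂) /
          (a₀ * z ^ 6 + a₁ * z ^ 4 + a₂ * z ^ 2 + a₃)
      = ∫ w in Set.Ioi (0:ℝ),
          (32 * (a₃ * b₀ + a₀ * b₂) * w ^ 4
            + 8 * (a₂ * b₀ + 3 * a₃ * b₀ + a₀ * b₁ + a₃ * b₁ + 3 * a₀ * b₂ + a₁ * b₂)
              * w ^ 2
            + 2 * (a₀ + a₁ + a₂ + a₃) * (b₀ + b₁ + b₂)) /
          (64 * a₀ * a₃ * w ^ 6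
            + 16 * (a₀ * a₂ + 6 * a₀ * a₃ + a₁ * a₃) * w ^ 4
            + 4 * (a₀ * a₁ + 4 * a₀ * a₂ + a₁ * a₂ + 9 * a₀ * a₃ + 4 * a₁ * a₃
                + a₂ * a₃) * w ^ 2
            + (a₀ + a₁ + a₂ + a₃) ^ 2) :=
  landen_degree_six_general a₀ a₁ a₂ a₃ b₀ b₁ b₂ ha₀ hpos
end
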